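/- arXiv:1806.04464 — 4 statements merged into one kernel-verified Lean document; each statement's English description precedes it below -/
import Mathlib

section
/- Let X₁, X₂, Y, β, γ be non-negative functions on [0,T], with β and t↦t·γ(t) integrable over [0,T], X₁ and X₂ absolutely continuous, and A > 0 a constant. Suppose (d/dt)X₁(t) ≤ A·Y(t)^{1/2}, (d/dt)X₂(t) + Y(t) ≤ β(t)X₂(t) + γ(t)X₁(t)², and X₁(0) = 0. Then X₁(t) ≤ A·X₂(0)^{1/2}·t^{1/2}·exp(½∫₀ᵗ(β(s)+A²sγ(s))ds) for all t in [0,T]. -/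
open MeasureTheory Set

private lemma intIcc {f : ℝ → ℝ} {a c : ℝ} (hac : a ≤ c) (h : IntegrableOn f (Icc a c)) :
    IntervalIntegrable f volume a c :=
  ((uIcc_of_le hac).symm ▸ h).intervalIntegrable

private lemma exp_lipschitz {x y M : ℝ} (hx : x ≤ M) (hy : y ≤ M) :
    |Real.exp x - Real.exp y| ≤ Real.exp M * |x - y| := by
  wlog h : y ≤ x generalizing x y
  · rw [abs_sub_comm (Real.exp x), abs_sub_comm x]
    exact this hy hx (le_of_not_ge h)
  have e1 : Real.exp (y - x) * Real.exp x = Real.exp y := by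
    rw [← Real.exp_add]; ring_nf
  have h1 : Real.exp x - Real.exp y ≤ (x - y) * Real.exp x := by
    nlinarith [Real.add_one_le_exp (y - x), Real.exp_pos x]
  have h2 : (x - y) * Real.exp x ≤ (x - y) * Real.exp M :=
    mul_le_mul_of_nonneg_left (Real.exp_le_exp.2 hx) (by linarith)
  rw [abs_of_nonneg (sub_nonneg.2 (Real.exp_le_exp.2 h)), abs_of_nonneg (sub_nonneg.2 h)]
  nlinarith

private lemma exp_primitive_aux (a c : ℝ) (hac : a ≤ c) (f : ℝ → ℝ)
    (hf : Integrable f) (hf0 : ∀ s, 0 ≤ f s) :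
    ∫ s in a..c, f s * Real.exp (∫ u in a..s, f u) = Real.exp (∫ u in a..c, f u) - 1 := by
  set P : ℝ → ℝ := fun s => ∫ u in a..s, f u with hP
  have hPcont : Continuous P :=
    intervalIntegral.continuous_primitive (fun _ _ => hf.intervalIntegrable) a
  set I := ∫ x, f x with hIdef
  have hI0 : 0 ≤ I := integral_nonneg hf0
  have hPle : ∀ s, a ≤ s → P s ≤ I := by
    intro s hs
    rw [hP]
    simp only []
    rw [intervalIntegral.integral_of_le hs]
    exact setIntegral_le_integral hf (ae_of_all _ hf0)
  have hPleM : ∀ s, a ≤ s → P s ≤ I + 1 := fun s hs => (hPle s hs).trans (by linarith)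
  set D := (∫ s in a..c, f s * Real.exp (P s)) - (Real.exp (P c) - 1) with hD
  set Cst := Real.exp (I + 1) * (2 + I) with hCst
  have hCpos : 0 < Cst := by rw [hCst]; positivity
  have key : ∀ ε : ℝ, 0 < ε → ε ≤ 1 → |D| ≤ ε * Cst := by
    intro ε hε hε1
    obtain ⟨g, -, hgL1, hgcont, hgint⟩ := hf.exists_hasCompactSupport_integral_sub_le hε
    set G : ℝ → ℝ := fun x => max (g x) 0 with hG
    have hGcont : Continuous G := hgcont.max continuous_const
    have hGint : Integrable G := hgint.pos_part
    have hG0 : ∀ x, 0 ≤ G x := fun x => le_max_right _ _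
    have hfG : ∀ x, |f x - G x| ≤ |f x - g x| := by
      intro x
      rcases le_total (g x) 0 with h | h
      · have hGx : G x = 0 := max_eq_right h
        rw [hGx, sub_zero, abs_of_nonneg (hf0 x)]
        calc f x ≤ f x - g x := by linarith
          _ ≤ |f x - g x| := le_abs_self _
      · have hGx : G x = g x := max_eq_left h
        rw [hGx]
    have haux0 : Integrable (fun x => |f x - G x|) := (hf.sub hGint).abs
    have hL1 : ∫ x, |f x - G x| ≤ ε := by
      refine le_trans (integral_mono haux0 (hf.sub hgint).abs hfG) ?_
      simpa [Real.norm_eq_abs] using hgL1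
    set Q : ℝ → ℝ := fun s => ∫ u in a..s, G u with hQ
    have hQcont : Continuous Q :=
      intervalIntegral.continuous_primitive (fun _ _ => hGint.intervalIntegrable) a
    have hPQ : ∀ s, a ≤ s → |P s - Q s| ≤ ε := by
      intro s hs
      have h1 : P s - Q s = ∫ u in a..s, (f u - G u) :=
        (intervalIntegral.integral_sub hf.intervalIntegrable hGint.intervalIntegrable).symm
      rw [h1]
      calc |∫ u in a..s, (f u - G u)| ≤ ∫ u in a..s, |f u - G u| :=
            intervalIntegral.abs_integral_le_integral_abs hs
        _ = ∫ u in Ioc a s, |f u - G u| := intervalIntegral.integral_of_le hs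
        _ ≤ ∫ u, |f u - G u| :=
            setIntegral_le_integral haux0 (ae_of_all _ fun x => abs_nonneg _)
        _ ≤ ε := hL1
    have hQle : ∀ s, a ≤ s → Q s ≤ I + 1 := by
      intro s hs
      have h1 := abs_le.1 (hPQ s hs)
      have h2 := hPle s hs
      linarith [h1.1]
    have keyG : ∫ s in a..c, G s * Real.exp (Q s) = Real.exp (Q c) - 1 := by
      have hderiv : ∀ s ∈ uIcc a c, HasDerivAt (fun u => Real.exp (Q u)) (G s * Real.exp (Q s)) s := by
        intro s _
        have h1 : HasDerivAt Q (G s) s :=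
          intervalIntegral.integral_hasDerivAt_right hGint.intervalIntegrable
            (hGcont.stronglyMeasurableAtFilter _ _) hGcont.continuousAt
        simpa [mul_comm] using h1.exp
      have h2 := intervalIntegral.integral_eq_sub_of_hasDerivAt hderiv
        ((hGcont.mul (Real.continuous_exp.comp hQcont)).intervalIntegrable a c)
      rw [h2]
      have hQa : Q a = 0 := intervalIntegral.integral_same
      rw [hQa, Real.exp_zero]
    have int1 : IntervalIntegrable (fun s => f s * Real.exp (P s)) volume a c :=
      intIcc hac ((hf.integrableOn).mul_continuousOn
        ((Real.continuous_exp.comp hPcont).continuousOn) isCompact_Icc)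
    have int2 : IntervalIntegrable (fun s => G s * Real.exp (Q s)) volume a c :=
      (hGcont.mul (Real.continuous_exp.comp hQcont)).intervalIntegrable a c
    have hptwise : ∀ s ∈ Icc a c, |f s * Real.exp (P s) - G s * Real.exp (Q s)| ≤
        Real.exp (I + 1) * |f s - G s| + (Real.exp (I + 1) * ε) * f s := by
      intro s hs
      have hsa := hs.1
      have e1 : Real.exp (Q s) ≤ Real.exp (I + 1) := Real.exp_le_exp.2 (hQle s hsa)
      have e2 : |Real.exp (P s) - Real.exp (Q s)| ≤ Real.exp (I + 1) * ε := by
        refine le_trans (exp_lipschitz (hPleM s hsa) (hQle s hsa)) ?_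
        have := hPQ s hsa
        nlinarith [Real.exp_pos (I + 1)]
      have hre : f s * Real.exp (P s) - G s * Real.exp (Q s) =
          (f s - G s) * Real.exp (Q s) + f s * (Real.exp (P s) - Real.exp (Q s)) := by ring
      rw [hre]
      calc |(f s - G s) * Real.exp (Q s) + f s * (Real.exp (P s) - Real.exp (Q s))|
          ≤ |(f s - G s) * Real.exp (Q s)| + |f s * (Real.exp (P s) - Real.exp (Q s))| :=
            abs_add_le _ _
        _ = |f s - G s| * Real.exp (Q s) + f s * |Real.exp (P s) - Real.exp (Q s)| := by
            rw [abs_mul, abs_mul, abs_of_pos (Real.exp_pos _), abs_of_nonneg (hf0 s)]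
        _ ≤ Real.exp (I + 1) * |f s - G s| + (Real.exp (I + 1) * ε) * f s := by
            have b1 : |f s - G s| * Real.exp (Q s) ≤ |f s - G s| * Real.exp (I + 1) :=
              mul_le_mul_of_nonneg_left e1 (abs_nonneg _)
            have b2 : f s * |Real.exp (P s) - Real.exp (Q s)| ≤ f s * (Real.exp (I + 1) * ε) :=
              mul_le_mul_of_nonneg_left e2 (hf0 s)
            nlinarith [b1, b2]
    have hL1' : ∫ s in a..c, |f s - G s| ≤ ε := by
      calc ∫ s in a..c, |f s - G s| = ∫ u in Ioc a c, |f u - G u| :=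
            intervalIntegral.integral_of_le hac
        _ ≤ ∫ u, |f u - G u| :=
            setIntegral_le_integral haux0 (ae_of_all _ fun x => abs_nonneg _)
        _ ≤ ε := hL1
    have hest : |∫ s in a..c, (f s * Real.exp (P s) - G s * Real.exp (Q s))| ≤
        Real.exp (I + 1) * ε + (Real.exp (I + 1) * ε) * I := by
      have habs : IntervalIntegrable
          (fun s => |f s * Real.exp (P s) - G s * Real.exp (Q s)|) volume a c := (int1.sub int2).abs
      have hIntR : IntervalIntegrable
          (fun s => Real.exp (I + 1) * |f s - G s| + (Real.exp (I + 1) * ε) * f s) volume a c :=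
        ((haux0.intervalIntegrable).const_mul _).add (hf.intervalIntegrable.const_mul _)
      calc |∫ s in a..c, (f s * Real.exp (P s) - G s * Real.exp (Q s))|
          ≤ ∫ s in a..c, |f s * Real.exp (P s) - G s * Real.exp (Q s)| :=
            intervalIntegral.abs_integral_le_integral_abs hac
        _ ≤ ∫ s in a..c, (Real.exp (I + 1) * |f s - G s| + (Real.exp (I + 1) * ε) * f s) :=
            intervalIntegral.integral_mono_on hac habs hIntR hptwise
        _ = Real.exp (I + 1) * (∫ s in a..c, |f s - G s|) +
            (Real.exp (I + 1) * ε) * (∫ s in a..c, f s) := by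
            rw [intervalIntegral.integral_add ((haux0.intervalIntegrable).const_mul _)
              (hf.intervalIntegrable.const_mul _), intervalIntegral.integral_const_mul,
              intervalIntegral.integral_const_mul]
        _ ≤ Real.exp (I + 1) * ε + (Real.exp (I + 1) * ε) * I := by
            have A1 : Real.exp (I + 1) * (∫ s in a..c, |f s - G s|) ≤ Real.exp (I + 1) * ε :=
              mul_le_mul_of_nonneg_left hL1' (Real.exp_pos _).le
            have A2 : (Real.exp (I + 1) * ε) * (∫ s in a..c, f s) ≤ (Real.exp (I + 1) * ε) * I :=
              mul_le_mul_of_nonneg_left (hPle c hac) (by positivity)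
            linarith
    have hexpc : |Real.exp (Q c) - Real.exp (P c)| ≤ Real.exp (I + 1) * ε := by
      refine le_trans (exp_lipschitz (hQle c hac) (hPleM c hac)) ?_
      have h1 := hPQ c hac
      rw [abs_sub_comm] at h1
      nlinarith [Real.exp_pos (I + 1)]
    have hDeq : D = (∫ s in a..c, (f s * Real.exp (P s) - G s * Real.exp (Q s))) +
        (Real.exp (Q c) - Real.exp (P c)) := by
      rw [hD, intervalIntegral.integral_sub int1 int2, keyG]; ring
    calc |D| ≤ |∫ s in a..c, (f s * Real.exp (P s) - G s * Real.exp (Q s))| +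
          |Real.exp (Q c) - Real.exp (P c)| := hDeq ▸ abs_add_le _ _
      _ ≤ (Real.exp (I + 1) * ε + (Real.exp (I + 1) * ε) * I) + Real.exp (I + 1) * ε :=
          add_le_add hest hexpc
      _ = ε * Cst := by rw [hCst]; ring
  have hD0 : D = 0 := by
    rcases eq_or_lt_of_le (abs_nonneg D) with h | h
    · exact abs_eq_zero.mp h.symm
    · exfalso
      have h1 := key (min 1 (|D| / (2 * Cst))) (by positivity) (min_le_left _ _)
      have h2 : min 1 (|D| / (2 * Cst)) * Cst ≤ (|D| / (2 * Cst)) * Cst :=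
        mul_le_mul_of_nonneg_right (min_le_right _ _) hCpos.le
      have h3 : (|D| / (2 * Cst)) * Cst = |D| / 2 := by field_simp
      rw [h3] at h2
      linarith
  have := sub_eq_zero.mp hD0
  linarith [this]

private lemma exp_primitive (a c : ℝ) (hac : a ≤ c) (f : ℝ → ℝ)
    (hf : IntegrableOn f (Icc a c)) (hf0 : ∀ s ∈ Icc a c, 0 ≤ f s) :
    ∫ s in a..c, f s * Real.exp (∫ u in a..s, f u) = Real.exp (∫ u in a..c, f u) - 1 := by
  set F : ℝ → ℝ := (Icc a c).indicator f with hF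
  have hFint : Integrable F := by
    rw [hF]
    exact (integrable_indicator_iff measurableSet_Icc).2 hf
  have hF0 : ∀ s, 0 ≤ F s := by
    intro s
    by_cases h : s ∈ Icc a c
    · rw [hF, indicator_of_mem h]; exact hf0 s h
    · rw [hF, indicator_of_notMem h]
  have hPeq : ∀ s ∈ Icc a c, (∫ u in a..s, F u) = ∫ u in a..s, f u := by
    intro s hs
    refine intervalIntegral.integral_congr fun u hu => ?_
    rw [uIcc_of_le hs.1] at hu
    simp only [hF]
    exact indicator_of_mem (mem_Icc.mpr ⟨hu.1, hu.2.trans hs.2⟩) f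
  have h1 := exp_primitive_aux a c hac F hFint hF0
  rw [hPeq c ⟨hac, le_rfl⟩] at h1
  rw [← h1]
  refine intervalIntegral.integral_congr fun s hs => ?_
  rw [uIcc_of_le hac] at hs
  rw [hPeq s hs]
  simp only [hF]
  rw [indicator_of_mem hs]

private lemma gronwall_int (a c C : ℝ) (hac : a ≤ c) (b V : ℝ → ℝ)
    (hbint : IntegrableOn b (Icc a c)) (hb0 : ∀ s ∈ Icc a c, 0 ≤ b s)
    (hV : ContinuousOn V (Icc a c))
    (hineq : ∀ τ ∈ Icc a c, V τ ≤ C + ∫ s in a..τ, b s * V s) :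
    V c ≤ C * Real.exp (∫ s in a..c, b s) := by
  set B : ℝ → ℝ := fun s => ∫ u in a..s, b u with hB
  have hBcont : ContinuousOn B (Icc a c) := by
    rw [← uIcc_of_le hac] at hbint ⊢
    exact intervalIntegral.continuousOn_primitive_interval hbint
  have hcont2 : ContinuousOn (fun s => V s * Real.exp (-B s)) (Icc a c) :=
    hV.mul ((Real.continuous_exp.comp continuous_neg).comp_continuousOn hBcont)
  obtain ⟨τ, hτ, hmax⟩ := isCompact_Icc.exists_isMaxOn (nonempty_Icc.2 hac) hcont2
  set K := V τ * Real.exp (-B τ) with hK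
  have hVle : ∀ s ∈ Icc a c, V s ≤ K * Real.exp (B s) := by
    intro s hs
    have h1 : V s * Real.exp (-B s) ≤ K := hmax hs
    have h2 := mul_le_mul_of_nonneg_right h1 (Real.exp_pos (B s)).le
    rwa [mul_assoc, ← Real.exp_add, neg_add_cancel, Real.exp_zero, mul_one] at h2
  have hsubτ : Icc a τ ⊆ Icc a c := Icc_subset_Icc le_rfl hτ.2
  have hbτ : IntegrableOn b (Icc a τ) := hbint.mono_set hsubτ
  have hint1 : IntervalIntegrable (fun s => b s * V s) volume a τ :=
    intIcc hτ.1 (hbτ.mul_continuousOn (hV.mono hsubτ) isCompact_Icc)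
  have hint2 : IntervalIntegrable (fun s => b s * (K * Real.exp (B s))) volume a τ :=
    intIcc hτ.1 (hbτ.mul_continuousOn
      (continuousOn_const.mul ((Real.continuous_exp.comp_continuousOn (hBcont.mono hsubτ))))
      isCompact_Icc)
  have step : V τ ≤ C + K * (Real.exp (B τ) - 1) := by
    have h1 := hineq τ hτ
    have h2 : (∫ s in a..τ, b s * V s) ≤ ∫ s in a..τ, b s * (K * Real.exp (B s)) :=
      intervalIntegral.integral_mono_on hτ.1 hint1 hint2 fun x hx =>
        mul_le_mul_of_nonneg_left (hVle x (hsubτ hx)) (hb0 x (hsubτ hx))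
    have h3 : (∫ s in a..τ, b s * (K * Real.exp (B s))) =
        K * ∫ s in a..τ, b s * Real.exp (B s) := by
      rw [← intervalIntegral.integral_const_mul]
      exact intervalIntegral.integral_congr fun x _ => by ring
    have h4 : (∫ s in a..τ, b s * Real.exp (B s)) = Real.exp (B τ) - 1 :=
      exp_primitive a τ hτ.1 b hbτ fun s hs => hb0 s (hsubτ hs)
    rw [h3, h4] at h2
    linarith
  have hVτ : V τ = K * Real.exp (B τ) := by
    rw [hK, mul_assoc, ← Real.exp_add, neg_add_cancel, Real.exp_zero, mul_one]
  have hKC : K ≤ C := by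
    rw [hVτ] at step
    nlinarith [Real.exp_pos (B τ)]
  calc V c ≤ K * Real.exp (B c) := hVle c ⟨hac, le_rfl⟩
    _ ≤ C * Real.exp (B c) := mul_le_mul_of_nonneg_right hKC (Real.exp_pos _).le

/-- Gronwall-type lemma (Li, J. Diff. Eq. 2017, Lemma 2.5), first estimate:
under `X₁' ≤ A·√Y`, `X₂' + Y ≤ β·X₂ + γ·X₁²`, `X₁(0) = 0`, one has
`X₁(t) ≤ A·X₂(0)^{1/2}·t^{1/2}·exp(½∫₀ᵗ (β + A²sγ))`. -/
theorem gronwall_type_X1_bound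
    (T A : ℝ) (hT : 0 < T) (hA : 0 < A)
    (X1 X2 Y β γ X1' X2' : ℝ → ℝ)
    (hX1nn : ∀ t ∈ Icc (0:ℝ) T, 0 ≤ X1 t)
    (hX2nn : ∀ t ∈ Icc (0:ℝ) T, 0 ≤ X2 t)
    (hYnn : ∀ t ∈ Icc (0:ℝ) T, 0 ≤ Y t)
    (hβnn : ∀ t ∈ Icc (0:ℝ) T, 0 ≤ β t)
    (hγnn : ∀ t ∈ Icc (0:ℝ) T, 0 ≤ γ t)
    (hβint : IntegrableOn β (Icc (0:ℝ) T))
    (hγint : IntegrableOn (fun s => s * γ s) (Icc (0:ℝ) T))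
    (hX1deriv : ∀ t ∈ Icc (0:ℝ) T, HasDerivAt X1 (X1' t) t)
    (hX2deriv : ∀ t ∈ Icc (0:ℝ) T, HasDerivAt X2 (X2' t) t)
    (hIneq1 : ∀ t ∈ Icc (0:ℝ) T, X1' t ≤ A * Real.sqrt (Y t))
    (hIneq2 : ∀ t ∈ Icc (0:ℝ) T, X2' t + Y t ≤ β t * X2 t + γ t * (X1 t) ^ 2)
    (hX10 : X1 0 = 0) :
    ∀ t ∈ Icc (0:ℝ) T,
      X1 t ≤ A * Real.sqrt (X2 0) * Real.sqrt t *
        Real.exp ((1/2) * ∫ s in (0:ℝ)..t, (β s + A ^ 2 * s * γ s)) := by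
  intro t ht
  rcases eq_or_lt_of_le ht.1 with h0 | htpos
  · rw [← h0]
    simp [hX10]
  set b : ℝ → ℝ := fun s => β s + A ^ 2 * s * γ s with hb
  have hbint : IntegrableOn b (Icc (0:ℝ) T) := by
    have h1 : IntegrableOn (fun s => A ^ 2 * (s * γ s)) (Icc (0:ℝ) T) := hγint.const_mul _
    have h2 := hβint.add h1
    simpa [hb, mul_assoc] using (show IntegrableOn (fun s => β s + A ^ 2 * (s * γ s)) (Icc (0:ℝ) T) from h2)
  have hb0 : ∀ s ∈ Icc (0:ℝ) T, 0 ≤ b s := fun s hs =>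
    add_nonneg (hβnn s hs) (mul_nonneg (mul_nonneg (by positivity) hs.1) (hγnn s hs))
  set Bt := ∫ s in (0:ℝ)..t, b s with hBt
  have hmain : ∀ t₁ ∈ Ioc (0:ℝ) t, X1 t ^ 2 / (A ^ 2 * t) ≤
      (X2 t₁ + X1 t₁ ^ 2 / (A ^ 2 * t₁)) * Real.exp Bt := by
    intro t₁ ht₁
    have hsub : Icc t₁ t ⊆ Icc (0:ℝ) T := Icc_subset_Icc ht₁.1.le ht.2
    set V : ℝ → ℝ := fun τ => X2 τ + X1 τ ^ 2 / (A ^ 2 * τ) with hV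
    set V' : ℝ → ℝ := fun τ =>
      X2' τ + (2 * X1 τ * X1' τ * (A ^ 2 * τ) - X1 τ ^ 2 * A ^ 2) / (A ^ 2 * τ) ^ 2 with hV'
    have hVd : ∀ τ ∈ Icc t₁ t, HasDerivAt V (V' τ) τ := by
      intro τ hτ
      have hτ0 : (0:ℝ) < τ := lt_of_lt_of_le ht₁.1 hτ.1
      have hne : A ^ 2 * τ ≠ 0 := by positivity
      have h1 := hX1deriv τ (hsub hτ)
      have hpow : HasDerivAt (fun s => X1 s ^ 2) (2 * X1 τ * X1' τ) τ := by
        simpa using h1.fun_pow 2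
      have hden : HasDerivAt (fun s => A ^ 2 * s) (A ^ 2) τ := by
        simpa using (hasDerivAt_id τ).const_mul (A ^ 2)
      have hdiv := hpow.div hden hne
      exact (hX2deriv τ (hsub hτ)).add hdiv
    have hVcont : ContinuousOn V (Icc t₁ t) := fun τ hτ =>
      (hVd τ hτ).continuousAt.continuousWithinAt
    have hbV : IntegrableOn (fun s => b s * V s) (Icc t₁ t) :=
      (hbint.mono_set hsub).mul_continuousOn hVcont isCompact_Icc
    have hV'le : ∀ τ ∈ Ioo t₁ t, V' τ ≤ b τ * V τ := by
      intro τ hτ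
      have hτI : τ ∈ Icc (0:ℝ) T := hsub ⟨hτ.1.le, hτ.2.le⟩
      have hτ0 : (0:ℝ) < τ := ht₁.1.trans hτ.1
      have hx1 := hX1nn τ hτI
      have hx2 := hX2nn τ hτI
      have hy := hYnn τ hτI
      have hβτ := hβnn τ hτI
      have hγτ := hγnn τ hτI
      have hi1 := hIneq1 τ hτI
      have hi2 := hIneq2 τ hτI
      have hsy : Real.sqrt (Y τ) ^ 2 = Y τ := Real.sq_sqrt hy
      have hsy0 : 0 ≤ Real.sqrt (Y τ) := Real.sqrt_nonneg _
      have e1 : (2 * X1 τ * X1' τ * (A ^ 2 * τ) - X1 τ ^ 2 * A ^ 2) / (A ^ 2 * τ) ^ 2 ≤ Y τ := by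
        rw [div_le_iff₀ (by positivity)]
        have hc : (0:ℝ) ≤ 2 * X1 τ * (A ^ 2 * τ) := by positivity
        have m1 : 2 * X1 τ * X1' τ * (A ^ 2 * τ) ≤
            2 * X1 τ * (A * Real.sqrt (Y τ)) * (A ^ 2 * τ) := by
          nlinarith [mul_le_mul_of_nonneg_left hi1 hc]
        have hyy : Real.sqrt (Y τ) ^ 2 * (A ^ 2 * τ) ^ 2 = Y τ * (A ^ 2 * τ) ^ 2 := by
          rw [hsy]
        nlinarith [sq_nonneg (X1 τ * A - Real.sqrt (Y τ) * (A ^ 2 * τ)), m1, hyy]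
      have e2 : β τ * X2 τ + γ τ * X1 τ ^ 2 ≤ b τ * V τ := by
        simp only [hb, hV]
        have hfrac : (0:ℝ) ≤ X1 τ ^ 2 / (A ^ 2 * τ) := by positivity
        have hexpand : (β τ + A ^ 2 * τ * γ τ) * (X2 τ + X1 τ ^ 2 / (A ^ 2 * τ)) =
            β τ * X2 τ + β τ * (X1 τ ^ 2 / (A ^ 2 * τ)) + A ^ 2 * τ * γ τ * X2 τ +
              γ τ * X1 τ ^ 2 := by
          field_simp
          ring
        rw [hexpand]
        nlinarith [mul_nonneg hβτ hfrac,
          mul_nonneg (mul_nonneg (by positivity : (0:ℝ) ≤ A ^ 2 * τ) hγτ) hx2]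
      have e3 : V' τ ≤ X2' τ + Y τ := by
        simp only [hV']
        linarith [e1]
      exact e3.trans (le_trans hi2 e2)
    have hFTC : ∀ τ ∈ Icc t₁ t, V τ ≤ V t₁ + ∫ s in t₁..τ, b s * V s := by
      intro τ hτ
      have h1 := intervalIntegral.sub_le_integral_of_hasDeriv_right_of_le hτ.1
        (hVcont.mono (Icc_subset_Icc le_rfl hτ.2))
        (fun x hx => (hVd x ⟨hx.1.le, hx.2.le.trans hτ.2⟩).hasDerivWithinAt)
        (hbV.mono_set (Icc_subset_Icc le_rfl hτ.2))
        (fun x hx => hV'le x ⟨hx.1, hx.2.trans_le hτ.2⟩)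
      linarith
    have hgr := gronwall_int t₁ t (V t₁) ht₁.2 b V (hbint.mono_set hsub)
      (fun s hs => hb0 s (hsub hs)) hVcont hFTC
    have hint01 : IntervalIntegrable b volume 0 t₁ :=
      intIcc ht₁.1.le (hbint.mono_set (Icc_subset_Icc le_rfl (ht₁.2.trans ht.2)))
    have hint1t : IntervalIntegrable b volume t₁ t := intIcc ht₁.2 (hbint.mono_set hsub)
    have hadd := intervalIntegral.integral_add_adjacent_intervals hint01 hint1t
    have hnn : 0 ≤ ∫ s in (0:ℝ)..t₁, b s :=
      intervalIntegral.integral_nonneg ht₁.1.le fun u hu =>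
        hb0 u ⟨hu.1, hu.2.trans (ht₁.2.trans ht.2)⟩
    have hexp : Real.exp (∫ s in t₁..t, b s) ≤ Real.exp Bt := by
      rw [hBt]
      exact Real.exp_le_exp.2 (by linarith [hadd, hnn])
    have hVt₁nn : 0 ≤ V t₁ := by
      have h2 := hX2nn t₁ ⟨ht₁.1.le, ht₁.2.trans ht.2⟩
      have h3 : (0:ℝ) ≤ X1 t₁ ^ 2 / (A ^ 2 * t₁) :=
        div_nonneg (sq_nonneg _) (mul_nonneg (by positivity) ht₁.1.le)
      simp only [hV]
      linarith
    have hVtle : V t ≤ (X2 t₁ + X1 t₁ ^ 2 / (A ^ 2 * t₁)) * Real.exp Bt := by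
      calc V t ≤ V t₁ * Real.exp (∫ s in t₁..t, b s) := hgr
        _ ≤ V t₁ * Real.exp Bt := mul_le_mul_of_nonneg_left hexp hVt₁nn
        _ = (X2 t₁ + X1 t₁ ^ 2 / (A ^ 2 * t₁)) * Real.exp Bt := by rw [hV]
    have hX2t := hX2nn t ht
    have hfin : X1 t ^ 2 / (A ^ 2 * t) ≤ V t := by
      simp only [hV]
      linarith
    linarith
  have hlim : Filter.Tendsto (fun t₁ => (X2 t₁ + X1 t₁ ^ 2 / (A ^ 2 * t₁)) * Real.exp Bt)
      (nhdsWithin 0 (Ioi 0)) (nhds (X2 0 * Real.exp Bt)) := by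
    have h0T : (0:ℝ) ∈ Icc (0:ℝ) T := ⟨le_rfl, hT.le⟩
    have hX2c : Filter.Tendsto X2 (nhdsWithin 0 (Ioi 0)) (nhds (X2 0)) :=
      ((hX2deriv 0 h0T).continuousAt.tendsto).mono_left nhdsWithin_le_nhds
    have hX1c : Filter.Tendsto X1 (nhdsWithin 0 (Ioi 0)) (nhds 0) := by
      have h1 := ((hX1deriv 0 h0T).continuousAt.tendsto).mono_left
        (nhdsWithin_le_nhds (s := Ioi (0:ℝ)))
      rwa [hX10] at h1
    have hslope : Filter.Tendsto (fun x => X1 x / x) (nhdsWithin 0 (Ioi 0)) (nhds (X1' 0)) := by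
      have h1 := hasDerivAt_iff_tendsto_slope.mp (hX1deriv 0 h0T)
      have h2 : Filter.Tendsto (slope X1 0) (nhdsWithin 0 (Ioi 0)) (nhds (X1' 0)) :=
        h1.mono_left (nhdsWithin_mono _ fun x hx => ne_of_gt hx)
      refine h2.congr fun x => ?_
      rw [slope_def_field, hX10, sub_zero, sub_zero]
    have hquot : Filter.Tendsto (fun x => X1 x ^ 2 / (A ^ 2 * x)) (nhdsWithin 0 (Ioi 0))
        (nhds 0) := by
      have h3 : Filter.Tendsto (fun x => X1 x / x * X1 x * (A ^ 2)⁻¹) (nhdsWithin 0 (Ioi 0))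
          (nhds (X1' 0 * 0 * (A ^ 2)⁻¹)) := (hslope.mul hX1c).mul_const _
      rw [mul_zero, zero_mul] at h3
      refine h3.congr' ?_
      filter_upwards [self_mem_nhdsWithin] with x hx
      have hx0 : x ≠ 0 := ne_of_gt hx
      field_simp
    have h4 := (hX2c.add hquot).mul_const (Real.exp Bt)
    simpa using h4
  have hkey : X1 t ^ 2 / (A ^ 2 * t) ≤ X2 0 * Real.exp Bt := by
    refine ge_of_tendsto hlim ?_
    filter_upwards [Ioc_mem_nhdsGT htpos] with t₁ ht₁ using hmain t₁ ht₁
  have hX1t := hX1nn t ht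
  have hAt : (0:ℝ) < A ^ 2 * t := by positivity
  have hsq : X1 t ^ 2 ≤ A ^ 2 * t * (X2 0 * Real.exp Bt) := by
    rw [div_le_iff₀ hAt] at hkey
    linarith [hkey]
  show X1 t ≤ A * Real.sqrt (X2 0) * Real.sqrt t * Real.exp (1 / 2 * Bt)
  set R := A * Real.sqrt (X2 0) * Real.sqrt t * Real.exp (1 / 2 * Bt) with hR
  have hRnn : 0 ≤ R := by rw [hR]; positivity
  have hR2 : R ^ 2 = A ^ 2 * t * (X2 0 * Real.exp Bt) := by
    rw [hR]
    have h1 : Real.sqrt (X2 0) ^ 2 = X2 0 := Real.sq_sqrt (hX2nn 0 ⟨le_rfl, hT.le⟩)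
    have h2 : Real.sqrt t ^ 2 = t := Real.sq_sqrt ht.1
    have h3 : Real.exp (1 / 2 * Bt) ^ 2 = Real.exp Bt := by
      rw [sq, ← Real.exp_add]
      congr 1
      ring
    rw [mul_pow, mul_pow, mul_pow, h1, h2, h3]
    ring
  calc X1 t = Real.sqrt (X1 t ^ 2) := (Real.sqrt_sq hX1t).symm
    _ ≤ Real.sqrt (R ^ 2) := Real.sqrt_le_sqrt (by rw [hR2]; exact hsq)
    _ = R := Real.sqrt_sq hRnn
end

section
/- Under the hypotheses of the Gronwall-type lemma (X₁' ≤ A·Y^{1/2}, X₂' + Y ≤ βX₂ + γX₁², X₁(0)=0), one has X₂(t) + ∫₀ᵗ Y(s) ds ≤ X₂(0)·exp(∫₀ᵗ(β(s)+A²sγ(s))ds) for all t in [0,T]. -/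
open MeasureTheory Set Filter

section GronwallAux

private lemma linear_bound {X1 : ℝ → ℝ} {d T : ℝ} (hT : 0 < T)
    (hcont : ContinuousOn X1 (Icc 0 T))
    (hder : HasDerivAt X1 d 0) (h0 : X1 0 = 0) :
    ∃ C : ℝ, 0 ≤ C ∧ ∀ u ∈ Icc (0:ℝ) T, X1 u ≤ C * u := by
  obtain ⟨M, hM⟩ := (isCompact_Icc.image_of_continuousOn hcont).bddAbove
  have hslope := hasDerivAt_iff_tendsto_slope.1 hder
  rw [Metric.tendsto_nhdsWithin_nhds] at hslope
  obtain ⟨δ, hδ, hδ'⟩ := hslope 1 one_pos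
  refine ⟨max (|d| + 1) (max M 0 / δ), le_trans (by positivity) (le_max_left _ _), ?_⟩
  rintro u ⟨hu0, huT⟩
  rcases eq_or_lt_of_le hu0 with rfl | hu0'
  · simp [h0]
  by_cases hu : u < δ
  · have := hδ' (by simp [hu0'.ne'] : u ∈ ({0}ᶜ : Set ℝ)) (by simp [abs_of_pos hu0', hu] : dist u 0 < δ)
    have hs : slope X1 0 u = X1 u / u := by simp [slope_def_field, h0]
    rw [hs, Real.dist_eq] at this
    have h1 : X1 u / u ≤ |d| + 1 := by
      have := abs_sub_abs_le_abs_sub (X1 u / u) d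
      have h2 : X1 u / u ≤ |X1 u / u| := le_abs_self _
      nlinarith [abs_nonneg (X1 u / u - d), le_abs_self d]
    calc X1 u = (X1 u / u) * u := by field_simp
    _ ≤ (|d| + 1) * u := by nlinarith
    _ ≤ max (|d| + 1) (max M 0 / δ) * u := by
        have := le_max_left (|d| + 1) (max M 0 / δ); nlinarith
  · push_neg at hu
    have hXM : X1 u ≤ M := hM ⟨u, ⟨hu0, huT⟩, rfl⟩
    have h1 : X1 u ≤ max M 0 / δ * u := by
      rw [div_mul_eq_mul_div, le_div_iff₀ hδ]
      have : max M 0 * δ ≤ max M 0 * u := by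
        apply mul_le_mul_of_nonneg_left hu (le_max_right _ _)
      nlinarith [le_max_left M 0, le_max_right M 0]
    calc X1 u ≤ max M 0 / δ * u := h1
    _ ≤ _ := by have := le_max_right (|d| + 1) (max M 0 / δ); nlinarith


private lemma cs_bound {Y : ℝ → ℝ} {s : ℝ} (hs : 0 ≤ s)
    (hint : IntegrableOn Y (Ioc 0 s)) (hnn : ∀ u ∈ Ioc (0:ℝ) s, 0 ≤ Y u) :
    (∫ u in (0:ℝ)..s, Real.sqrt (Y u)) ^ 2 ≤ s * ∫ u in (0:ℝ)..s, Y u := by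
  rw [intervalIntegral.integral_of_le hs, intervalIntegral.integral_of_le hs]
  set μ := volume.restrict (Ioc (0:ℝ) s) with hμ
  have hnn' : 0 ≤ᵐ[μ] Y := (ae_restrict_iff' measurableSet_Ioc).2 (Filter.Eventually.of_forall hnn)
  have hf : AEStronglyMeasurable (fun u => Real.sqrt (Y u)) μ :=
    Real.continuous_sqrt.comp_aestronglyMeasurable hint.aestronglyMeasurable
  have hsq : (fun u => Real.sqrt (Y u) ^ 2) =ᵐ[μ] Y := by
    filter_upwards [hnn'] with u hu using Real.sq_sqrt hu
  have hmf : MemLp (fun u => Real.sqrt (Y u)) (ENNReal.ofReal 2) μ := by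
    have : MemLp (fun u => Real.sqrt (Y u)) 2 μ :=
      (memLp_two_iff_integrable_sq hf).2 (hint.congr hsq.symm)
    simpa [ENNReal.ofReal_ofNat] using this
  have hmg : MemLp (fun _ : ℝ => (1:ℝ)) (ENNReal.ofReal 2) μ := memLp_const 1
  have hpq : Real.HolderConjugate 2 2 := Real.holderConjugate_iff.mpr ⟨one_lt_two, by norm_num⟩
  have H := integral_mul_le_Lp_mul_Lq_of_nonneg hpq
      (Filter.Eventually.of_forall fun u => Real.sqrt_nonneg (Y u))
      (Filter.Eventually.of_forall fun _ => zero_le_one) hmf hmg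
  simp only [mul_one] at H
  have h2 : ∀ x : ℝ, 0 ≤ x → x ^ (2:ℝ) = x ^ 2 := fun x hx => by
    rw [← Real.rpow_natCast x 2]; norm_num
  have hint2 : (∫ u, Real.sqrt (Y u) ^ (2:ℝ) ∂μ) = ∫ u, Y u ∂μ := by
    refine integral_congr_ae ?_
    filter_upwards [hnn'] with u hu
    rw [h2 _ (Real.sqrt_nonneg _), Real.sq_sqrt hu]
  have hint1 : (∫ _u, (1:ℝ) ^ (2:ℝ) ∂μ) = s := by
    simp [hμ, Real.volume_Ioc, hs]
  rw [hint2, hint1] at H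
  have hYnn : 0 ≤ ∫ u, Y u ∂μ := integral_nonneg_of_ae hnn'
  have hIs : 0 ≤ ∫ u, Real.sqrt (Y u) ∂μ :=
    integral_nonneg fun u => Real.sqrt_nonneg _
  calc (∫ u, Real.sqrt (Y u) ∂μ) ^ 2
      ≤ ((∫ u, Y u ∂μ) ^ (1/2:ℝ) * s ^ (1/2:ℝ)) ^ 2 := by
        apply pow_le_pow_left₀ hIs H
    _ = ((∫ u, Y u ∂μ) ^ (1/2:ℝ)) ^ 2 * (s ^ (1/2:ℝ)) ^ 2 := mul_pow _ _ _
    _ = (∫ u, Y u ∂μ) * s := by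
        rw [← h2 _ (Real.rpow_nonneg hYnn _), ← h2 _ (Real.rpow_nonneg hs _),
          ← Real.rpow_mul hYnn, ← Real.rpow_mul hs]
        norm_num
    _ = s * ∫ u, Y u ∂μ := mul_comm _ _


private lemma core (T A : ℝ) (hT : 0 < T) (hA : 0 < A)
    (X1 X2 Y β γ X1' X2' : ℝ → ℝ)
    (hX1nn : ∀ t ∈ Icc (0:ℝ) T, 0 ≤ X1 t)
    (hX2nn : ∀ t ∈ Icc (0:ℝ) T, 0 ≤ X2 t)
    (hYnn : ∀ t ∈ Icc (0:ℝ) T, 0 ≤ Y t)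
    (hβnn : ∀ t ∈ Icc (0:ℝ) T, 0 ≤ β t)
    (hγnn : ∀ t ∈ Icc (0:ℝ) T, 0 ≤ γ t)
    (hβint : IntegrableOn β (Icc (0:ℝ) T))
    (hγint : IntegrableOn (fun s => s * γ s) (Icc (0:ℝ) T))
    (hX1deriv : ∀ t ∈ Icc (0:ℝ) T, HasDerivAt X1 (X1' t) t)
    (hX2deriv : ∀ t ∈ Icc (0:ℝ) T, HasDerivAt X2 (X2' t) t)
    (hIneq1 : ∀ t ∈ Icc (0:ℝ) T, X1' t ≤ A * Real.sqrt (Y t))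
    (hIneq2 : ∀ t ∈ Icc (0:ℝ) T, X2' t + Y t ≤ β t * X2 t + γ t * (X1 t) ^ 2)
    (hX10 : X1 0 = 0)
    {t : ℝ} (ht0 : 0 ≤ t) (htT : t ≤ T) (hYint : IntegrableOn Y (Ioc (0:ℝ) t)) :
    X2 t + (∫ s in (0:ℝ)..t, Y s) ≤
      X2 0 * Real.exp (∫ s in (0:ℝ)..t, (β s + A ^ 2 * s * γ s)) := by
  have hsub : Icc (0:ℝ) t ⊆ Icc 0 T := Icc_subset_Icc le_rfl htT
  have hX1cont : ContinuousOn X1 (Icc 0 T) := fun x hx =>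
    ((hX1deriv x hx).continuousAt).continuousWithinAt
  have hX2cont : ContinuousOn X2 (Icc 0 T) := fun x hx =>
    ((hX2deriv x hx).continuousAt).continuousWithinAt
  -- interval integrability of Y
  have hYI : ∀ a b, 0 ≤ a → a ≤ b → b ≤ t → IntervalIntegrable Y volume a b := by
    intro a b ha hab hb
    exact (intervalIntegrable_iff_integrableOn_Ioc_of_le hab).2
      (hYint.mono_set (Ioc_subset_Ioc ha hb))
  -- g and its properties
  set g : ℝ → ℝ := fun u => β u + A ^ 2 * u * γ u with hg_def
  have hgint : IntegrableOn g (Icc (0:ℝ) T) := by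
    apply hβint.add
    have heq : (fun u => A ^ 2 * u * γ u) = fun u => A ^ 2 * (u * γ u) := by
      funext u; ring
    rw [heq]
    exact hγint.const_mul (A ^ 2)
  have hgI : ∀ a b, 0 ≤ a → a ≤ b → b ≤ T → IntervalIntegrable g volume a b := by
    intro a b ha hab hb
    exact (intervalIntegrable_iff_integrableOn_Ioc_of_le hab).2
      ((hgint.mono_set ((Ioc_subset_Icc_self).trans (Icc_subset_Icc ha hb))))
  have hgnn : ∀ u ∈ Icc (0:ℝ) T, 0 ≤ g u := by
    intro u hu
    have := hβnn u hu; have := hγnn u hu; have := hu.1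
    positivity
  set G : ℝ → ℝ := fun s => ∫ u in (0:ℝ)..s, g u with hG_def
  have hGcont : ContinuousOn G (Icc 0 t) := by
    have : IntegrableOn g (uIcc (0:ℝ) t) := by
      rw [uIcc_of_le ht0]; exact hgint.mono_set hsub
    simpa [hG_def, uIcc_of_le ht0] using intervalIntegral.continuousOn_primitive_interval this
  have hGadd : ∀ a b, 0 ≤ a → a ≤ b → b ≤ t → G b = G a + ∫ u in a..b, g u := by
    intro a b ha hab hb
    rw [hG_def]
    exact (intervalIntegral.integral_add_adjacent_intervals
      (hgI 0 a le_rfl ha (le_trans (hab.trans hb) htT))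
      (hgI a b ha hab (hb.trans htT))).symm
  have hGnn : ∀ s ∈ Icc (0:ℝ) t, 0 ≤ G s := fun s hs =>
    intervalIntegral.integral_nonneg hs.1 (fun u hu => hgnn u ⟨hu.1, hu.2.trans (hs.2.trans htT)⟩)
  -- IY and Z
  set IY : ℝ → ℝ := fun s => ∫ u in (0:ℝ)..s, Y u with hIY_def
  have hIYcont : ContinuousOn IY (Icc 0 t) := by
    have : IntegrableOn Y (uIcc (0:ℝ) t) := by
      rw [uIcc_of_le ht0, integrableOn_Icc_iff_integrableOn_Ioc]; exact hYint
    simpa [hIY_def, uIcc_of_le ht0] using intervalIntegral.continuousOn_primitive_interval this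
  have hIYnn : ∀ s ∈ Icc (0:ℝ) t, 0 ≤ IY s := fun s hs =>
    intervalIntegral.integral_nonneg hs.1 (fun u hu => hYnn u ⟨hu.1, hu.2.trans (hs.2.trans htT)⟩)
  set Z : ℝ → ℝ := fun s => X2 s + IY s with hZ_def
  have hZcont : ContinuousOn Z (Icc 0 t) := (hX2cont.mono hsub).add hIYcont
  have hZnn : ∀ s ∈ Icc (0:ℝ) t, 0 ≤ Z s := fun s hs =>
    add_nonneg (hX2nn s (hsub hs)) (hIYnn s hs)
  have hX2leZ : ∀ s ∈ Icc (0:ℝ) t, X2 s ≤ Z s := fun s hs =>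
    le_add_of_nonneg_right (hIYnn s hs)
  have hIYleZ : ∀ s ∈ Icc (0:ℝ) t, IY s ≤ Z s := fun s hs =>
    le_add_of_nonneg_left (hX2nn s (hsub hs))
  -- sqrt Y integrable
  have hsqrtY : ∀ s ∈ Icc (0:ℝ) t, IntegrableOn (fun u => A * Real.sqrt (Y u)) (Icc 0 s) := by
    intro s hs
    have hYs : IntegrableOn Y (Icc 0 s) := by
      rw [integrableOn_Icc_iff_integrableOn_Ioc]
      exact hYint.mono_set (Ioc_subset_Ioc le_rfl hs.2)
    have hmeas : AEStronglyMeasurable (fun u => A * Real.sqrt (Y u))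
        (volume.restrict (Icc 0 s)) :=
      (Real.continuous_sqrt.comp_aestronglyMeasurable hYs.aestronglyMeasurable).const_mul A
    apply Integrable.mono' ((hYs.const_mul A).add (integrable_const A)) hmeas
    filter_upwards [ae_restrict_mem measurableSet_Icc] with u hu
    have h0 : 0 ≤ Y u := hYnn u ⟨hu.1, hu.2.trans (hs.2.trans htT)⟩
    have h1 : Real.sqrt (Y u) ≤ 1 + Y u := by
      have := Real.sqrt_le_sqrt (by nlinarith : Y u ≤ (1 + Y u) ^ 2)
      rwa [Real.sqrt_sq (by linarith)] at this
    rw [Real.norm_eq_abs, abs_of_nonneg (by positivity)]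
    calc A * Real.sqrt (Y u) ≤ A * (1 + Y u) := by nlinarith
    _ = A * Y u + A := by ring
  -- X1 s ≤ A * ∫₀ˢ √Y  and  X1 s ^ 2 ≤ A^2 * s * IY s
  have hX1sq : ∀ s ∈ Icc (0:ℝ) t, X1 s ^ 2 ≤ A ^ 2 * s * IY s := by
    intro s hs
    have hbound : X1 s ≤ ∫ u in (0:ℝ)..s, A * Real.sqrt (Y u) := by
      have := intervalIntegral.sub_le_integral_of_hasDeriv_right_of_le hs.1
        (hX1cont.mono (Icc_subset_Icc le_rfl (hs.2.trans htT)))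
        (fun x hx => (hX1deriv x ⟨hx.1.le, hx.2.le.trans (hs.2.trans htT)⟩).hasDerivWithinAt)
        (hsqrtY s hs)
        (fun x hx => hIneq1 x ⟨hx.1.le, hx.2.le.trans (hs.2.trans htT)⟩)
      rwa [hX10, sub_zero] at this
    have hsqle : (∫ u in (0:ℝ)..s, Real.sqrt (Y u)) ^ 2 ≤ s * IY s := by
      apply cs_bound hs.1 (hYint.mono_set (Ioc_subset_Ioc le_rfl hs.2))
      exact fun u hu => hYnn u ⟨hu.1.le, hu.2.trans (hs.2.trans htT)⟩
    have hIsqrt : 0 ≤ ∫ u in (0:ℝ)..s, Real.sqrt (Y u) :=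
      intervalIntegral.integral_nonneg hs.1 (fun u _ => Real.sqrt_nonneg _)
    have h1 : X1 s ^ 2 ≤ (A * ∫ u in (0:ℝ)..s, Real.sqrt (Y u)) ^ 2 := by
      rw [intervalIntegral.integral_const_mul] at hbound
      exact pow_le_pow_left₀ (hX1nn s (hsub hs)) hbound 2
    calc X1 s ^ 2 ≤ (A * ∫ u in (0:ℝ)..s, Real.sqrt (Y u)) ^ 2 := h1
    _ = A ^ 2 * (∫ u in (0:ℝ)..s, Real.sqrt (Y u)) ^ 2 := by ring
    _ ≤ A ^ 2 * (s * IY s) := by nlinarith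
    _ = A ^ 2 * s * IY s := by ring

  -- linear bound on X1 (for integrability of γ X1²)
  obtain ⟨C, hC0, hC⟩ := linear_bound hT hX1cont (hX1deriv 0 ⟨le_rfl, hT.le⟩) hX10
  -- a.e. measurability of γ on Ioc 0 t
  have hγaem : AEStronglyMeasurable γ (volume.restrict (Ioc (0:ℝ) t)) := by
    have hw : AEStronglyMeasurable (fun u => u * γ u) (volume.restrict (Ioc (0:ℝ) t)) :=
      (hγint.mono_set ((Ioc_subset_Icc_self).trans (Icc_subset_Icc le_rfl htT))).aestronglyMeasurable
    have hinv : AEStronglyMeasurable (fun u : ℝ => u⁻¹) (volume.restrict (Ioc (0:ℝ) t)) :=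
      (measurable_inv).aestronglyMeasurable
    apply (hinv.mul hw).congr
    filter_upwards [ae_restrict_mem measurableSet_Ioc] with u hu
    have : u ≠ 0 := ne_of_gt hu.1
    simp only [Pi.mul_apply]
    field_simp
  -- integrability of γ * X1^2
  have hγX1 : ∀ a b, 0 ≤ a → a ≤ b → b ≤ t →
      IntegrableOn (fun u => γ u * X1 u ^ 2) (Ioc a b) := by
    intro a b ha hab hb
    have hmeas : AEStronglyMeasurable (fun u => γ u * X1 u ^ 2)
        (volume.restrict (Ioc a b)) := by
      apply AEStronglyMeasurable.mul
      · exact hγaem.mono_measure (Measure.restrict_mono (Ioc_subset_Ioc ha hb) le_rfl)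
      · exact (((hX1cont.mono (fun x hx => ⟨le_trans ha (le_of_lt hx.1),
          le_trans hx.2 (hb.trans htT)⟩)).pow 2).aestronglyMeasurable measurableSet_Ioc)
    have hdom : IntegrableOn (fun u => C ^ 2 * t * (u * γ u)) (Ioc a b) :=
      (hγint.mono_set ((Ioc_subset_Icc_self).trans
        (Icc_subset_Icc ha (hb.trans htT)))).const_mul _
    apply Integrable.mono' hdom hmeas
    filter_upwards [ae_restrict_mem measurableSet_Ioc] with u hu
    have huIcc : u ∈ Icc (0:ℝ) T := ⟨le_trans ha hu.1.le, hu.2.trans (hb.trans htT)⟩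
    have h1 : 0 ≤ γ u := hγnn u huIcc
    have h2 : 0 ≤ X1 u := hX1nn u huIcc
    have h3 : X1 u ≤ C * u := hC u huIcc
    have h4 : u ≤ t := hu.2.trans hb
    have h5 : 0 ≤ u := le_trans ha hu.1.le
    rw [Real.norm_eq_abs, abs_of_nonneg (by positivity)]
    have h6 : X1 u ^ 2 ≤ C ^ 2 * u ^ 2 := by nlinarith
    have h7 : γ u * X1 u ^ 2 ≤ γ u * (C ^ 2 * u ^ 2) := mul_le_mul_of_nonneg_left h6 h1
    have h8 : 0 ≤ C ^ 2 * ((u * γ u) * (t - u)) :=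
      mul_nonneg (sq_nonneg C) (mul_nonneg (mul_nonneg h5 h1) (by linarith))
    nlinarith [h7, h8]
  -- the key integral inequality
  have hKey : ∀ a b, 0 ≤ a → a ≤ b → b ≤ t →
      Z b ≤ Z a + ∫ u in a..b, g u * Z u := by
    intro a b ha hab hb
    have habT : b ≤ T := hb.trans htT
    have hIccsub : Icc a b ⊆ Icc (0:ℝ) T := Icc_subset_Icc ha habT
    have hIccsubt : Icc a b ⊆ Icc (0:ℝ) t := Icc_subset_Icc ha hb
    have huIcc : uIcc a b = Icc a b := uIcc_of_le hab
    have iβX2 : IntervalIntegrable (fun u => β u * X2 u) volume a b := by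
      apply IntervalIntegrable.mul_continuousOn
      · exact (intervalIntegrable_iff_integrableOn_Ioc_of_le hab).2
          (hβint.mono_set ((Ioc_subset_Icc_self).trans hIccsub))
      · rw [huIcc]; exact hX2cont.mono hIccsub
    have iγX1 : IntervalIntegrable (fun u => γ u * X1 u ^ 2) volume a b :=
      (intervalIntegrable_iff_integrableOn_Ioc_of_le hab).2 (hγX1 a b ha hab hb)
    have iY : IntervalIntegrable Y volume a b := hYI a b ha hab hb
    have iψ : IntervalIntegrable (fun u => β u * X2 u + γ u * X1 u ^ 2) volume a b :=
      iβX2.add iγX1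
    have iφ : IntervalIntegrable (fun u => β u * X2 u + γ u * X1 u ^ 2 - Y u) volume a b :=
      iψ.sub iY
    -- hammer
    have hham : X2 b - X2 a ≤ ∫ u in a..b, (β u * X2 u + γ u * X1 u ^ 2 - Y u) := by
      apply intervalIntegral.sub_le_integral_of_hasDeriv_right_of_le hab
        (hX2cont.mono hIccsub)
        (fun x hx => (hX2deriv x (hIccsub ⟨hx.1.le, hx.2.le⟩)).hasDerivWithinAt)
        ((intervalIntegrable_iff_integrableOn_Icc_of_le hab).1 iφ)
      intro x hx
      have := hIneq2 x (hIccsub ⟨hx.1.le, hx.2.le⟩)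
      linarith
    have hsplit : IY b = IY a + ∫ u in a..b, Y u := by
      rw [hIY_def]
      exact (intervalIntegral.integral_add_adjacent_intervals
        (hYI 0 a le_rfl ha (hab.trans hb)) iY).symm
    have hφψ : (∫ u in a..b, (β u * X2 u + γ u * X1 u ^ 2 - Y u))
        = (∫ u in a..b, (β u * X2 u + γ u * X1 u ^ 2)) - ∫ u in a..b, Y u :=
      intervalIntegral.integral_sub iψ iY
    have hmono : (∫ u in a..b, (β u * X2 u + γ u * X1 u ^ 2))
        ≤ ∫ u in a..b, g u * Z u := by
      apply intervalIntegral.integral_mono_on hab iψ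
      · apply IntervalIntegrable.mul_continuousOn (hgI a b ha hab habT)
        rw [huIcc]; exact hZcont.mono hIccsubt
      · intro u hu
        have huT : u ∈ Icc (0:ℝ) T := hIccsub hu
        have hut : u ∈ Icc (0:ℝ) t := hIccsubt hu
        have e1 : β u * X2 u ≤ β u * Z u :=
          mul_le_mul_of_nonneg_left (hX2leZ u hut) (hβnn u huT)
        have e2 : γ u * X1 u ^ 2 ≤ γ u * (A ^ 2 * u * IY u) :=
          mul_le_mul_of_nonneg_left (hX1sq u hut) (hγnn u huT)
        have e3 : A ^ 2 * u * γ u * IY u ≤ A ^ 2 * u * γ u * Z u := by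
          apply mul_le_mul_of_nonneg_left (hIYleZ u hut)
          have := hγnn u huT; have := huT.1; positivity
        have : g u * Z u = β u * Z u + A ^ 2 * u * γ u * Z u := by
          rw [hg_def]; ring
        rw [this]
        nlinarith
    have : Z b - Z a ≤ ∫ u in a..b, g u * Z u := by
      rw [hZ_def]
      simp only
      rw [hsplit]
      linarith [hham, hφψ ▸ hham, hmono]
    linarith
  
  -- local Gronwall step
  have hLocal : ∀ a b, 0 ≤ a → a ≤ b → b ≤ t → ∀ η : ℝ, (∫ u in a..b, g u) ≤ η → η < 1 →
      ∀ s ∈ Icc a b, Z s ≤ Z a / (1 - η) := by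
    intro a b ha hab hb η hη hη1
    have hIccsubt : Icc a b ⊆ Icc (0:ℝ) t := Icc_subset_Icc ha hb
    obtain ⟨x₀, hx₀mem, hx₀max⟩ := (isCompact_Icc).exists_isMaxOn (nonempty_Icc.2 hab)
      (hZcont.mono hIccsubt)
    have hZleM : ∀ s ∈ Icc a b, Z s ≤ Z x₀ := fun s hs => hx₀max hs
    have hMnn : 0 ≤ Z x₀ := hZnn x₀ (hIccsubt hx₀mem)
    have h1 : Z x₀ ≤ Z a + Z x₀ * η := by
      have h2 := hKey a x₀ ha hx₀mem.1 (hx₀mem.2.trans hb)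
      have h3 : (∫ u in a..x₀, g u * Z u) ≤ ∫ u in a..x₀, g u * Z x₀ := by
        apply intervalIntegral.integral_mono_on hx₀mem.1
        · apply IntervalIntegrable.mul_continuousOn
            (hgI a x₀ ha hx₀mem.1 ((hx₀mem.2.trans hb).trans htT))
          rw [uIcc_of_le hx₀mem.1]
          exact hZcont.mono (fun y hy => hIccsubt ⟨hy.1, hy.2.trans hx₀mem.2⟩)
        · exact (hgI a x₀ ha hx₀mem.1 ((hx₀mem.2.trans hb).trans htT)).mul_const (Z x₀)
        · intro u hu
          exact mul_le_mul_of_nonneg_left (hZleM u ⟨hu.1, hu.2.trans hx₀mem.2⟩)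
            (hgnn u ⟨ha.trans hu.1, (hu.2.trans hx₀mem.2).trans (hb.trans htT)⟩)
      have h4 : (∫ u in a..x₀, g u * Z x₀) = (∫ u in a..x₀, g u) * Z x₀ :=
        intervalIntegral.integral_mul_const _ _
      have h5 : (∫ u in a..x₀, g u) ≤ η := by
        have hsplit : (∫ u in a..b, g u)
            = (∫ u in a..x₀, g u) + ∫ u in x₀..b, g u :=
          (intervalIntegral.integral_add_adjacent_intervals
            (hgI a x₀ ha hx₀mem.1 ((hx₀mem.2.trans hb).trans htT))
            (hgI x₀ b (ha.trans hx₀mem.1) hx₀mem.2 (hb.trans htT))).symm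
        have hpos : 0 ≤ ∫ u in x₀..b, g u :=
          intervalIntegral.integral_nonneg hx₀mem.2
            (fun u hu => hgnn u ⟨(ha.trans hx₀mem.1).trans hu.1, hu.2.trans (hb.trans htT)⟩)
        linarith
      have h6 : (∫ u in a..x₀, g u) * Z x₀ ≤ η * Z x₀ :=
        mul_le_mul_of_nonneg_right h5 hMnn
      calc Z x₀ ≤ Z a + ∫ u in a..x₀, g u * Z u := h2
      _ ≤ Z a + (∫ u in a..x₀, g u) * Z x₀ := by rw [← h4] at *; linarith
      _ ≤ Z a + Z x₀ * η := by linarith [h6]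
    intro s hs
    have h1d : 0 < 1 - η := by linarith
    have hM : Z x₀ ≤ Z a / (1 - η) := by
      rw [le_div_iff₀ h1d]
      nlinarith
    exact (hZleM s hs).trans hM
  -- main induction
  have hInd : ∀ d : ℝ, 0 ≤ d → d < 1 → ∀ i : ℕ, ∀ a ∈ Icc (0:ℝ) t, G a ≤ i * d →
      Z a ≤ Z 0 * ((1 - d)⁻¹) ^ i := by
    intro d hd0 hd1 i
    induction i with
    | zero =>
      intro a ha hGa
      simp only [Nat.cast_zero, zero_mul] at hGa
      have hGa' : (∫ u in (0:ℝ)..a, g u) ≤ 0 := hGa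
      have h := hLocal 0 a le_rfl ha.1 ha.2 0 hGa' zero_lt_one a ⟨ha.1, le_rfl⟩
      simpa using h
    | succ i ih =>
      intro a ha hGa
      have h1d : 0 < 1 - d := by linarith
      have hinv1 : (1:ℝ) ≤ (1 - d)⁻¹ := by
        have hmul : (1 - d) * (1 - d)⁻¹ = 1 := mul_inv_cancel₀ (ne_of_gt h1d)
        nlinarith [inv_nonneg.2 h1d.le]
      have hZ0 : 0 ≤ Z 0 := hZnn 0 ⟨le_rfl, ht0⟩
      by_cases hcase : G a ≤ i * d
      · have h := ih a ha hcase
        calc Z a ≤ Z 0 * ((1 - d)⁻¹) ^ i := h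
        _ ≤ Z 0 * ((1 - d)⁻¹) ^ (i + 1) := by
            apply mul_le_mul_of_nonneg_left _ hZ0
            exact pow_le_pow_right₀ hinv1 (Nat.le_succ i)
      · push_neg at hcase
        have hid0 : (0:ℝ) ≤ i * d := by positivity
        have hG0 : G 0 = 0 := by simp [hG_def]
        have hmem : ((i:ℝ) * d) ∈ Icc (G 0) (G a) := ⟨by rw [hG0]; exact hid0, hcase.le⟩
        obtain ⟨b, hbmem, hGb⟩ := intermediate_value_Icc ha.1
          (hGcont.mono (Icc_subset_Icc le_rfl ha.2)) hmem
        have hbt : b ∈ Icc (0:ℝ) t := ⟨hbmem.1, hbmem.2.trans ha.2⟩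
        have hZb := ih b hbt (le_of_eq hGb)
        have hδ : (∫ u in b..a, g u) ≤ d := by
          have hadd := hGadd b a hbmem.1 hbmem.2 ha.2
          have heq : (∫ u in b..a, g u) = G a - (i:ℝ) * d := by rw [hadd, hGb]; ring
          rw [heq]
          push_cast at hGa
          linarith
        have h := hLocal b a hbmem.1 hbmem.2 ha.2 d hδ hd1 a ⟨hbmem.2, le_rfl⟩
        calc Z a ≤ Z b / (1 - d) := h
        _ ≤ (Z 0 * ((1 - d)⁻¹) ^ i) / (1 - d) := by gcongr
        _ = Z 0 * ((1 - d)⁻¹) ^ (i + 1) := by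
            rw [pow_succ]
            field_simp
  -- conclusion via limit N → ∞
  have hGt0 : 0 ≤ G t := hGnn t ⟨ht0, le_rfl⟩
  have hseq : ∀ N : ℕ, G t < N → Z t ≤ Z 0 * ((1 - G t / N)⁻¹) ^ N := by
    intro N hN
    have hN0 : 0 < (N:ℝ) := lt_of_le_of_lt hGt0 hN
    have hd0 : 0 ≤ G t / N := div_nonneg hGt0 hN0.le
    have hd1 : G t / N < 1 := (div_lt_one hN0).2 hN
    apply hInd _ hd0 hd1 N t ⟨ht0, le_rfl⟩
    rw [mul_div_cancel₀ _ (ne_of_gt hN0)]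
  have hlim : Tendsto (fun N : ℕ => Z 0 * ((1 - G t / N)⁻¹) ^ N) atTop
      (nhds (Z 0 * Real.exp (G t))) := by
    have h1 := Real.tendsto_one_add_div_pow_exp (-(G t))
    have h2 : (fun N : ℕ => (1 + -(G t) / N) ^ N) = fun N : ℕ => (1 - G t / N) ^ N := by
      funext N; rw [neg_div, ← sub_eq_add_neg]
    rw [h2] at h1
    have h3 := h1.inv₀ (Real.exp_ne_zero _)
    rw [Real.exp_neg, inv_inv] at h3
    have h4 : (fun N : ℕ => ((1 - G t / N) ^ N)⁻¹) = fun N : ℕ => ((1 - G t / N)⁻¹) ^ N := by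
      funext N; rw [inv_pow]
    rw [h4] at h3
    exact h3.const_mul _
  have hfinal : Z t ≤ Z 0 * Real.exp (G t) := by
    apply ge_of_tendsto hlim
    filter_upwards [eventually_gt_atTop ⌈G t⌉₊] with N hN
    exact hseq N (lt_of_le_of_lt (Nat.le_ceil _) (by exact_mod_cast hN))
  have hZ0eq : Z 0 = X2 0 := by
    simp [hZ_def, hIY_def]
  rw [hZ0eq] at hfinal
  exact hfinal


end GronwallAux

/-- Gronwall-type lemma, second estimate:
`X₂(t) + ∫₀ᵗ Y(s) ds ≤ X₂(0)·exp(∫₀ᵗ (β + A²sγ))`. -/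
theorem gronwall_type_X2_bound
    (T A : ℝ) (hT : 0 < T) (hA : 0 < A)
    (X1 X2 Y β γ X1' X2' : ℝ → ℝ)
    (hX1nn : ∀ t ∈ Icc (0:ℝ) T, 0 ≤ X1 t)
    (hX2nn : ∀ t ∈ Icc (0:ℝ) T, 0 ≤ X2 t)
    (hYnn : ∀ t ∈ Icc (0:ℝ) T, 0 ≤ Y t)
    (hβnn : ∀ t ∈ Icc (0:ℝ) T, 0 ≤ β t)
    (hγnn : ∀ t ∈ Icc (0:ℝ) T, 0 ≤ γ t)
    (hβint : IntegrableOn β (Icc (0:ℝ) T))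
    (hγint : IntegrableOn (fun s => s * γ s) (Icc (0:ℝ) T))
    (hX1deriv : ∀ t ∈ Icc (0:ℝ) T, HasDerivAt X1 (X1' t) t)
    (hX2deriv : ∀ t ∈ Icc (0:ℝ) T, HasDerivAt X2 (X2' t) t)
    (hIneq1 : ∀ t ∈ Icc (0:ℝ) T, X1' t ≤ A * Real.sqrt (Y t))
    (hIneq2 : ∀ t ∈ Icc (0:ℝ) T, X2' t + Y t ≤ β t * X2 t + γ t * (X1 t) ^ 2)
    (hX10 : X1 0 = 0) :
    ∀ t ∈ Icc (0:ℝ) T,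
      X2 t + (∫ s in (0:ℝ)..t, Y s) ≤
        X2 0 * Real.exp (∫ s in (0:ℝ)..t, (β s + A ^ 2 * s * γ s)) := by
  rintro t ⟨ht0, htT⟩
  by_cases h1 : IntegrableOn Y (Ioc (0:ℝ) t)
  · exact core T A hT hA X1 X2 Y β γ X1' X2' hX1nn hX2nn hYnn hβnn hγnn hβint hγint
      hX1deriv hX2deriv hIneq1 hIneq2 hX10 ht0 htT h1
  have hY0 : (∫ s in (0:ℝ)..t, Y s) = 0 := by
    apply intervalIntegral.integral_undef
    rw [intervalIntegrable_iff_integrableOn_Ioc_of_le ht0]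
    exact h1
  set Yt : ℝ → ℝ := fun u => (max (X1' u) 0 / A) ^ 2 with hYt_def
  have hYtnn : ∀ u ∈ Icc (0:ℝ) T, 0 ≤ Yt u := fun u _ => sq_nonneg _
  have hIneq1' : ∀ u ∈ Icc (0:ℝ) T, X1' u ≤ A * Real.sqrt (Yt u) := by
    intro u hu
    have h0 : 0 ≤ max (X1' u) 0 / A := div_nonneg (le_max_right _ _) hA.le
    rw [hYt_def]
    simp only
    rw [Real.sqrt_sq h0, mul_div_cancel₀ _ (ne_of_gt hA)]
    exact le_max_left _ _
  have hYtleY : ∀ u ∈ Icc (0:ℝ) T, Yt u ≤ Y u := by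
    intro u hu
    have h0 : 0 ≤ max (X1' u) 0 / A := div_nonneg (le_max_right _ _) hA.le
    have h1' : max (X1' u) 0 ≤ A * Real.sqrt (Y u) :=
      max_le (hIneq1 u hu) (by positivity)
    have h2 : max (X1' u) 0 / A ≤ Real.sqrt (Y u) := by
      rw [div_le_iff₀ hA]; linarith [h1']
    calc Yt u = (max (X1' u) 0 / A) ^ 2 := rfl
    _ ≤ Real.sqrt (Y u) ^ 2 := by nlinarith [Real.sqrt_nonneg (Y u)]
    _ = Y u := Real.sq_sqrt (hYnn u hu)
  have hIneq2' : ∀ u ∈ Icc (0:ℝ) T, X2' u + Yt u ≤ β u * X2 u + γ u * (X1 u) ^ 2 := by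
    intro u hu
    have := hIneq2 u hu
    have := hYtleY u hu
    linarith
  by_cases h2 : IntegrableOn Yt (Ioc (0:ℝ) t)
  · have hcore := core T A hT hA X1 X2 Yt β γ X1' X2' hX1nn hX2nn hYtnn hβnn hγnn hβint hγint
      hX1deriv hX2deriv hIneq1' hIneq2' hX10 ht0 htT h2
    have hYtint0 : 0 ≤ ∫ s in (0:ℝ)..t, Yt s :=
      intervalIntegral.integral_nonneg ht0 (fun u _ => sq_nonneg _)
    rw [hY0]
    linarith
  -- pathological case: derive a contradiction
  exfalso
  have hX1cont : ContinuousOn X1 (Icc 0 T) := fun x hx =>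
    ((hX1deriv x hx).continuousAt).continuousWithinAt
  have hX2cont : ContinuousOn X2 (Icc 0 T) := fun x hx =>
    ((hX2deriv x hx).continuousAt).continuousWithinAt
  -- measurable version of Yt
  have hmeasYt : AEStronglyMeasurable Yt (volume.restrict (Ioc (0:ℝ) t)) := by
    have hm : Measurable (fun u => (max (deriv X1 u) 0 / A) ^ 2) :=
      ((((measurable_deriv X1).max measurable_const).div_const A).pow_const 2)
    apply hm.aestronglyMeasurable.congr
    filter_upwards [ae_restrict_mem measurableSet_Ioc] with u hu
    have hd : deriv X1 u = X1' u := (hX1deriv u ⟨hu.1.le, hu.2.trans htT⟩).deriv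
    rw [hYt_def]
    simp only [hd]
  have hlint : (∫⁻ u in Ioc (0:ℝ) t, ENNReal.ofReal (Yt u)) = ⊤ := by
    by_contra hfin
    apply h2
    refine ⟨hmeasYt, ?_⟩
    rw [hasFiniteIntegral_iff_ofReal (Filter.Eventually.of_forall (fun u => sq_nonneg _))]
    exact lt_top_iff_ne_top.2 hfin
  -- the function h = βX2 + γX1² and its integrability on (0,t]
  obtain ⟨C, hC0, hC⟩ := linear_bound hT hX1cont (hX1deriv 0 ⟨le_rfl, hT.le⟩) hX10
  set h : ℝ → ℝ := fun u => β u * X2 u + γ u * (X1 u) ^ 2 with hh_def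
  have hhnn : ∀ u ∈ Icc (0:ℝ) T, 0 ≤ h u := by
    intro u hu
    have := hβnn u hu; have := hγnn u hu; have := hX2nn u hu
    have := sq_nonneg (X1 u)
    rw [hh_def]; simp only; positivity
  have hγaem : AEStronglyMeasurable γ (volume.restrict (Ioc (0:ℝ) t)) := by
    have hw : AEStronglyMeasurable (fun u => u * γ u) (volume.restrict (Ioc (0:ℝ) t)) :=
      (hγint.mono_set ((Ioc_subset_Icc_self).trans
        (Icc_subset_Icc le_rfl htT))).aestronglyMeasurable
    have hinv : AEStronglyMeasurable (fun u : ℝ => u⁻¹) (volume.restrict (Ioc (0:ℝ) t)) :=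
      (measurable_inv).aestronglyMeasurable
    apply (hinv.mul hw).congr
    filter_upwards [ae_restrict_mem measurableSet_Ioc] with u hu
    have : u ≠ 0 := ne_of_gt hu.1
    simp only [Pi.mul_apply]
    field_simp
  have hhint : IntegrableOn h (Ioc (0:ℝ) t) := by
    apply Integrable.add
    · have : IntervalIntegrable (fun u => β u * X2 u) volume 0 t := by
        apply IntervalIntegrable.mul_continuousOn
        · exact (intervalIntegrable_iff_integrableOn_Ioc_of_le ht0).2
            (hβint.mono_set ((Ioc_subset_Icc_self).trans (Icc_subset_Icc le_rfl htT)))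
        · rw [uIcc_of_le ht0]; exact hX2cont.mono (Icc_subset_Icc le_rfl htT)
      exact (intervalIntegrable_iff_integrableOn_Ioc_of_le ht0).1 this
    · have hmeas : AEStronglyMeasurable (fun u => γ u * X1 u ^ 2)
          (volume.restrict (Ioc (0:ℝ) t)) := by
        apply AEStronglyMeasurable.mul hγaem
        exact ((hX1cont.mono (fun x hx => ⟨hx.1.le, hx.2.trans htT⟩)).pow 2).aestronglyMeasurable
          measurableSet_Ioc
      have hdom : IntegrableOn (fun u => C ^ 2 * t * (u * γ u)) (Ioc (0:ℝ) t) :=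
        (hγint.mono_set ((Ioc_subset_Icc_self).trans (Icc_subset_Icc le_rfl htT))).const_mul _
      apply Integrable.mono' hdom hmeas
      filter_upwards [ae_restrict_mem measurableSet_Ioc] with u hu
      have huIcc : u ∈ Icc (0:ℝ) T := ⟨hu.1.le, hu.2.trans htT⟩
      have h1' : 0 ≤ γ u := hγnn u huIcc
      have h2' : 0 ≤ X1 u := hX1nn u huIcc
      have h3 : X1 u ≤ C * u := hC u huIcc
      have h4 : u ≤ t := hu.2
      have h5 : 0 ≤ u := hu.1.le
      rw [Real.norm_eq_abs, abs_of_nonneg (by positivity)]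
      have h6 : X1 u ^ 2 ≤ C ^ 2 * u ^ 2 := by nlinarith
      have h7 : γ u * X1 u ^ 2 ≤ γ u * (C ^ 2 * u ^ 2) := mul_le_mul_of_nonneg_left h6 h1'
      have h8 : 0 ≤ C ^ 2 * ((u * γ u) * (t - u)) :=
        mul_nonneg (sq_nonneg C) (mul_nonneg (mul_nonneg h5 h1') (by linarith))
      nlinarith [h7, h8]
  have hhIcc : IntegrableOn h (Icc (0:ℝ) t) := by
    rw [integrableOn_Icc_iff_integrableOn_Ioc]; exact hhint
  have hhI : ∀ a b, 0 ≤ a → a ≤ b → b ≤ t → IntervalIntegrable h volume a b := by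
    intro a b ha hab hb
    exact (intervalIntegrable_iff_integrableOn_Ioc_of_le hab).2
      (hhint.mono_set (Ioc_subset_Ioc ha hb))
  -- X2' ≤ h pointwise on [0,T]
  have hX2'le : ∀ u ∈ Icc (0:ℝ) T, X2' u ≤ h u := by
    intro u hu
    have := hIneq2 u hu; have := hYnn u hu
    rw [hh_def]; simp only; linarith
  -- clamp function
  set κ : ℝ → ℝ := fun s => min (max s 0) t with hκ_def
  have hκcont : Continuous κ := (continuous_id.max continuous_const).min continuous_const
  have hκmono : Monotone κ := fun a b hab =>
    min_le_min (max_le_max hab le_rfl) le_rfl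
  have hκmem : ∀ s, κ s ∈ Icc (0:ℝ) t := fun s =>
    ⟨le_min (le_max_right _ _) ht0, min_le_right _ _⟩
  have hκid : ∀ s ∈ Icc (0:ℝ) t, κ s = s := by
    intro s hs
    rw [hκ_def]
    simp only
    rw [max_eq_left hs.1, min_eq_left hs.2]
  -- primitive of h and clamped functions
  set P : ℝ → ℝ := fun s => ∫ u in (0:ℝ)..s, h u with hP_def
  have hPcont : ContinuousOn P (Icc (0:ℝ) t) := by
    have : IntegrableOn h (uIcc (0:ℝ) t) := by rw [uIcc_of_le ht0]; exact hhIcc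
    simpa [hP_def, uIcc_of_le ht0] using intervalIntegral.continuousOn_primitive_interval this
  set H : ℝ → ℝ := fun s => P (κ s) with hH_def
  set m : ℝ → ℝ := fun s => H s - X2 (κ s) with hm_def
  have hHdiff : ∀ a b : ℝ, a ≤ b → H b - H a = ∫ u in (κ a)..(κ b), h u := by
    intro a b hab
    have h1' := hκmem a; have h2' := hκmem b
    rw [hH_def]
    simp only
    rw [hP_def]
    simp only
    have := intervalIntegral.integral_add_adjacent_intervals
      (hhI 0 (κ a) le_rfl h1'.1 h1'.2)
      (hhI (κ a) (κ b) h1'.1 (hκmono hab) h2'.2)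
    linarith [this]
  have hX2κ : ∀ a b : ℝ, a ≤ b → X2 (κ b) - X2 (κ a) ≤ ∫ u in (κ a)..(κ b), h u := by
    intro a b hab
    have h1' := hκmem a; have h2' := hκmem b
    apply intervalIntegral.sub_le_integral_of_hasDeriv_right_of_le (hκmono hab)
      (hX2cont.mono (Icc_subset_Icc h1'.1 (h2'.2.trans htT)))
      (fun x hx => (hX2deriv x ⟨h1'.1.trans hx.1.le, hx.2.le.trans (h2'.2.trans htT)⟩).hasDerivWithinAt)
      ((intervalIntegrable_iff_integrableOn_Icc_of_le (hκmono hab)).1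
        (hhI (κ a) (κ b) h1'.1 (hκmono hab) h2'.2))
    intro x hx
    exact hX2'le x ⟨h1'.1.trans hx.1.le, hx.2.le.trans (h2'.2.trans htT)⟩
  have hmmono : Monotone m := by
    intro a b hab
    have hd := hHdiff a b hab
    have hx := hX2κ a b hab
    rw [hm_def]
    simp only
    linarith
  have hmcont : Continuous m := by
    have hHcont : Continuous H :=
      hPcont.comp_continuous hκcont hκmem
    have hX2κcont : Continuous (fun s => X2 (κ s)) :=
      (hX2cont.mono (Icc_subset_Icc le_rfl htT)).comp_continuous hκcont hκmem
    exact hHcont.sub hX2κcont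
  have hHmono : Monotone H := by
    intro a b hab
    have hd := hHdiff a b hab
    have hnn : 0 ≤ ∫ u in (κ a)..(κ b), h u :=
      intervalIntegral.integral_nonneg (hκmono hab)
        (fun u hu => hhnn u ⟨(hκmem a).1.trans hu.1, hu.2.trans ((hκmem b).2.trans htT)⟩)
    linarith
  have hHcont : Continuous H := hPcont.comp_continuous hκcont hκmem
  -- Stieltjes functions
  set S : StieltjesFunction ℝ :=
    ⟨m, hmmono, fun x => (hmcont.continuousAt).continuousWithinAt⟩ with hS_def
  set SH : StieltjesFunction ℝ :=
    ⟨H, hHmono, fun x => (hHcont.continuousAt).continuousWithinAt⟩ with hSH_def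
  -- measurable version of h on (0,t]
  have haem : AEStronglyMeasurable h (volume.restrict (Ioc (0:ℝ) t)) :=
    hhint.aestronglyMeasurable
  set Dm : ℝ → ℝ := haem.mk h with hDm_def
  have hDmmeas : StronglyMeasurable Dm := haem.stronglyMeasurable_mk
  have hDmeq : ∀ᵐ x ∂(volume.restrict (Ioc (0:ℝ) t)), h x = Dm x := haem.ae_eq_mk
  set D' : ℝ → ENNReal := (Ioc (0:ℝ) t).indicator (fun u => ENNReal.ofReal (Dm u)) with hD'_def
  have hD'meas : Measurable D' :=
    (ENNReal.measurable_ofReal.comp hDmmeas.measurable).indicator measurableSet_Ioc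
  -- identify SH.measure with withDensity D'
  have hμeq : SH.measure = volume.withDensity D' := by
    apply Measure.ext_of_Ioc
    intro a b hab
    rw [StieltjesFunction.measure_Ioc]
    have hcoe : (SH : ℝ → ℝ) = H := rfl
    rw [hcoe]
    rw [withDensity_apply _ measurableSet_Ioc]
    rw [hD'_def]
    rw [lintegral_indicator measurableSet_Ioc]
    rw [Measure.restrict_restrict measurableSet_Ioc]
    have hset : Ioc (0:ℝ) t ∩ Ioc a b = Ioc (κ a) (κ b) := by
      ext x
      simp only [mem_inter_iff, mem_Ioc, hκ_def, min_lt_iff, max_lt_iff, le_min_iff, le_max_iff]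
      constructor
      · rintro ⟨⟨h3, h4⟩, h1', h2'⟩
        exact ⟨Or.inl ⟨h1', h3⟩, ⟨Or.inl h2', h4⟩⟩
      · rintro ⟨h1', h2', h4⟩
        rcases h1' with h1' | h1'
        · rcases h2' with h2' | h2'
          · exact ⟨⟨h1'.2, h4⟩, h1'.1, h2'⟩
          · linarith [h1'.2]
        · linarith
    rw [hset]
    have hsubset : Ioc (κ a) (κ b) ⊆ Ioc (0:ℝ) t :=
      Ioc_subset_Ioc (hκmem a).1 (hκmem b).2
    have hDmeq' : ∀ᵐ x ∂(volume.restrict (Ioc (κ a) (κ b))), h x = Dm x :=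
      ae_mono (Measure.restrict_mono hsubset le_rfl) hDmeq
    have hstep : (∫⁻ x in Ioc (κ a) (κ b), ENNReal.ofReal (Dm x))
        = ∫⁻ x in Ioc (κ a) (κ b), ENNReal.ofReal (h x) := by
      apply lintegral_congr_ae
      filter_upwards [hDmeq'] with x hx
      rw [hx]
    rw [hstep]
    have hint' : IntegrableOn h (Ioc (κ a) (κ b)) := hhint.mono_set hsubset
    have hnn' : ∀ᵐ x ∂(volume.restrict (Ioc (κ a) (κ b))), 0 ≤ h x := by
      filter_upwards [ae_restrict_mem measurableSet_Ioc] with x hx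
      exact hhnn x ⟨(hκmem a).1.trans hx.1.le, hx.2.trans ((hκmem b).2.trans htT)⟩
    rw [← ofReal_integral_eq_lintegral_ofReal hint' hnn']
    congr 1
    rw [hHdiff a b hab.le, intervalIntegral.integral_of_le (hκmono hab.le)]
  -- rnDeriv identification and the contradiction
  have hrn : Measure.rnDeriv SH.measure volume =ᵐ[volume] D' := by
    rw [hμeq]
    exact Measure.rnDeriv_withDensity volume hD'meas
  have hae : ∀ᵐ x ∂(volume.restrict (Ioo (0:ℝ) t)),
      ENNReal.ofReal (Yt x) ≤ Measure.rnDeriv S.measure volume x := by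
    have hSd := S.ae_hasDerivAt
    have hHd := SH.ae_hasDerivAt
    have hDm' := (ae_restrict_iff' measurableSet_Ioc).1 hDmeq
    filter_upwards [ae_restrict_mem measurableSet_Ioo,
      ae_mono Measure.restrict_le_self hSd,
      ae_mono Measure.restrict_le_self hHd,
      ae_mono Measure.restrict_le_self hrn,
      ae_mono Measure.restrict_le_self hDm'] with x hx hmx hHx hrnx hDmx
    have hxIoc : x ∈ Ioc (0:ℝ) t := ⟨hx.1, hx.2.le⟩
    have hxT : x ∈ Icc (0:ℝ) T := ⟨hx.1.le, hx.2.le.trans htT⟩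
    -- derivative of m at x
    have hmx' : HasDerivAt m ((Measure.rnDeriv S.measure volume x).toReal) x := hmx
    have hHx' : HasDerivAt H ((Measure.rnDeriv SH.measure volume x).toReal) x := hHx
    -- near x, m = H - X2
    have hevent : (fun y => H y - X2 y) =ᶠ[nhds x] m := by
      have hmem : Ioo (0:ℝ) t ∈ nhds x := isOpen_Ioo.mem_nhds hx
      filter_upwards [hmem] with y hy
      rw [hm_def]
      simp only
      rw [hκid y ⟨hy.1.le, hy.2.le⟩]
    have hsub : HasDerivAt (fun y => H y - X2 y)
        ((Measure.rnDeriv SH.measure volume x).toReal - X2' x) x :=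
      hHx'.sub (hX2deriv x hxT)
    have huniq : (Measure.rnDeriv S.measure volume x).toReal
        = (Measure.rnDeriv SH.measure volume x).toReal - X2' x := by
      have := (hmx'.congr_of_eventuallyEq hevent).unique hsub
      -- careful with direction
      exact this
    -- compute SH rnDeriv at x
    have hD'x : D' x = ENNReal.ofReal (h x) := by
      rw [hD'_def]
      rw [indicator_of_mem hxIoc]
      rw [hDmx hxIoc]
    have htoReal : (Measure.rnDeriv SH.measure volume x).toReal = h x := by
      rw [hrnx, hD'x, ENNReal.toReal_ofReal (hhnn x hxT)]
    have hYtle : Yt x ≤ (Measure.rnDeriv S.measure volume x).toReal := by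
      rw [huniq, htoReal]
      have := hIneq2' x hxT
      rw [hh_def]
      simp only
      linarith
    exact ENNReal.ofReal_le_of_le_toReal hYtle
  have hfinal : (∫⁻ u in Ioc (0:ℝ) t, ENNReal.ofReal (Yt u)) ≤ S.measure (Ioc (0:ℝ) t) := by
    have hIocIoo : volume.restrict (Ioc (0:ℝ) t) = volume.restrict (Ioo (0:ℝ) t) :=
      (Measure.restrict_congr_set Ioo_ae_eq_Ioc).symm
    calc (∫⁻ u in Ioc (0:ℝ) t, ENNReal.ofReal (Yt u))
        = ∫⁻ u in Ioo (0:ℝ) t, ENNReal.ofReal (Yt u) := by rw [hIocIoo]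
    _ ≤ ∫⁻ u in Ioo (0:ℝ) t, Measure.rnDeriv S.measure volume u := lintegral_mono_ae hae
    _ ≤ S.measure (Ioo (0:ℝ) t) := Measure.setLIntegral_rnDeriv_le _
    _ ≤ S.measure (Ioc (0:ℝ) t) := measure_mono Ioo_subset_Ioc_self
  rw [hlint] at hfinal
  have : S.measure (Ioc (0:ℝ) t) < ⊤ := by
    rw [StieltjesFunction.measure_Ioc]
    exact ENNReal.ofReal_lt_top
  rw [top_le_iff.1 hfinal] at this
  exact absurd this (lt_irrefl ⊤)
end

section
/- Under the hypotheses of the Gronwall-type lemma, if additionally X₂(0) = 0, then X₁(t) = X₂(t) = 0 for all t in [0,T] and Y = 0 almost everywhere on [0,T]. -/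
open MeasureTheory Set

/-- Gronwall-type lemma, uniqueness part: if additionally `X₂(0) = 0`, then
`X₁ ≡ X₂ ≡ 0` on `[0,T]` and `Y = 0` almost everywhere on `[0,T]`. -/
theorem gronwall_type_zero
    (T A : ℝ) (hT : 0 < T) (hA : 0 < A)
    (X1 X2 Y β γ X1' X2' : ℝ → ℝ)
    (hX1nn : ∀ t ∈ Icc (0:ℝ) T, 0 ≤ X1 t)
    (hX2nn : ∀ t ∈ Icc (0:ℝ) T, 0 ≤ X2 t)
    (hYnn : ∀ t ∈ Icc (0:ℝ) T, 0 ≤ Y t)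
    (hβnn : ∀ t ∈ Icc (0:ℝ) T, 0 ≤ β t)
    (hγnn : ∀ t ∈ Icc (0:ℝ) T, 0 ≤ γ t)
    (hβint : IntegrableOn β (Icc (0:ℝ) T))
    (hγint : IntegrableOn (fun s => s * γ s) (Icc (0:ℝ) T))
    (hX1deriv : ∀ t ∈ Icc (0:ℝ) T, HasDerivAt X1 (X1' t) t)
    (hX2deriv : ∀ t ∈ Icc (0:ℝ) T, HasDerivAt X2 (X2' t) t)
    (hIneq1 : ∀ t ∈ Icc (0:ℝ) T, X1' t ≤ A * Real.sqrt (Y t))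
    (hIneq2 : ∀ t ∈ Icc (0:ℝ) T, X2' t + Y t ≤ β t * X2 t + γ t * (X1 t) ^ 2)
    (hX10 : X1 0 = 0) (hX20 : X2 0 = 0) :
    (∀ t ∈ Icc (0:ℝ) T, X1 t = 0 ∧ X2 t = 0) ∧
      (∀ᵐ t ∂(volume.restrict (Icc (0:ℝ) T)), Y t = 0) := by
  have hA2 : (0:ℝ) < A ^ 2 := by positivity
  obtain ⟨c, hcdef⟩ : ∃ c : ℝ → ℝ, c = fun s => β s + A ^ 2 * (s * γ s) := ⟨_, rfl⟩
  obtain ⟨H, hHdef⟩ : ∃ H : ℝ → ℝ, H = fun t => X1 t ^ 2 / (A ^ 2 * t) + X2 t := ⟨_, rfl⟩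
  have hcint : IntegrableOn c (Icc (0:ℝ) T) := by
    rw [hcdef]; exact hβint.add (hγint.const_mul (A ^ 2))
  have hcnn : ∀ s ∈ Icc (0:ℝ) T, 0 ≤ c s := fun s hs => by
    rw [hcdef]
    exact add_nonneg (hβnn s hs) (mul_nonneg hA2.le (mul_nonneg hs.1 (hγnn s hs)))
  have hHnn : ∀ t ∈ Icc (0:ℝ) T, 0 ≤ H t := fun t ht => by
    rw [hHdef]
    exact add_nonneg (div_nonneg (sq_nonneg _) (mul_nonneg hA2.le ht.1)) (hX2nn t ht)
  have hH0 : H 0 = 0 := by simp [hHdef, hX10, hX20]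
  -- continuity of H on [0, T]
  have hHcont : ContinuousOn H (Icc (0:ℝ) T) := by
    intro t ht
    rcases eq_or_lt_of_le ht.1 with h0 | h0
    · -- t = 0
      subst h0
      rw [ContinuousWithinAt, hH0]
      have hX2c : Filter.Tendsto X2 (nhdsWithin 0 (Icc (0:ℝ) T)) (nhds 0) := by
        have := (hX2deriv 0 ht).continuousAt.continuousWithinAt (s := Icc (0:ℝ) T)
        rwa [ContinuousWithinAt, hX20] at this
      have hslope : Filter.Tendsto (fun u => X1 u / u) (nhdsWithin 0 {(0:ℝ)}ᶜ)
          (nhds (X1' 0)) := by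
        have := hasDerivAt_iff_tendsto_slope.1 (hX1deriv 0 ht)
        refine this.congr' ?_
        filter_upwards [self_mem_nhdsWithin] with u hu
        simp [slope, hX10, div_eq_inv_mul]
      have hmain : Filter.Tendsto (fun u => X1 u ^ 2 / (A ^ 2 * u))
          (nhdsWithin 0 (Icc (0:ℝ) T)) (nhds 0) := by
        have h1 : Filter.Tendsto (fun u => (X1 u / u) ^ 2 * (u / A ^ 2))
            (nhdsWithin 0 {(0:ℝ)}ᶜ) (nhds 0) := by
          have h2 : Filter.Tendsto (fun u : ℝ => u / A ^ 2) (nhdsWithin 0 {(0:ℝ)}ᶜ)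
              (nhds 0) := by
            have h0 : Filter.Tendsto (fun u : ℝ => u / A ^ 2) (nhds 0) (nhds (0 / A ^ 2)) :=
              (continuous_id.div_const (A ^ 2)).tendsto 0
            simpa using h0.mono_left (nhdsWithin_le_nhds (s := {(0:ℝ)}ᶜ))
          have := ((hslope.pow 2).mul h2)
          simpa using this
        -- equality away from 0
        have heq : ∀ u : ℝ, u ≠ 0 → (X1 u / u) ^ 2 * (u / A ^ 2) = X1 u ^ 2 / (A ^ 2 * u) := by
          intro u hu
          field_simp
        have h3 : Filter.Tendsto (fun u => X1 u ^ 2 / (A ^ 2 * u))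
            (nhdsWithin 0 {(0:ℝ)}ᶜ) (nhds 0) := by
          refine h1.congr' ?_
          filter_upwards [self_mem_nhdsWithin] with u hu using heq u hu
        -- combine with the pure point 0
        have hsplit : nhdsWithin 0 (Icc (0:ℝ) T) ≤
            nhdsWithin 0 {(0:ℝ)} ⊔ nhdsWithin 0 {(0:ℝ)}ᶜ := by
          rw [← nhdsWithin_union, union_compl_self, nhdsWithin_univ]
          exact nhdsWithin_le_nhds
        refine Filter.Tendsto.mono_left ?_ hsplit
        rw [Filter.tendsto_sup]
        constructor
        · rw [nhdsWithin_singleton]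
          refine Filter.tendsto_pure_left.2 ?_
          intro s hs
          have : X1 (0:ℝ) ^ 2 / (A ^ 2 * 0) = 0 := by simp [hX10]
          rw [this]
          exact mem_of_mem_nhds hs
        · exact h3
      have := hmain.add hX2c
      rw [hHdef]
      simpa using this
    · -- t > 0
      have hc1 : ContinuousAt X1 t := (hX1deriv t ht).continuousAt
      have hc2 : ContinuousAt X2 t := (hX2deriv t ht).continuousAt
      have : ContinuousAt H t := by
        have hden : (A ^ 2 * t) ≠ 0 := by positivity
        rw [hHdef]
        exact ((hc1.pow 2).div (continuousAt_const.mul continuousAt_id) hden).add hc2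
      exact this.continuousWithinAt
  -- derivative of H
  obtain ⟨d, hddef⟩ : ∃ d : ℝ → ℝ, d = fun x =>
    (2 * X1 x * X1' x * (A ^ 2 * x) - X1 x ^ 2 * (A ^ 2)) / (A ^ 2 * x) ^ 2 + X2' x := ⟨_, rfl⟩
  have hHderiv : ∀ x ∈ Ioo (0:ℝ) T, HasDerivAt H (d x) x := by
    intro x hx
    have hxI : x ∈ Icc (0:ℝ) T := ⟨hx.1.le, hx.2.le⟩
    have h1 := hX1deriv x hxI
    have h2 := hX2deriv x hxI
    have hx0 : (0:ℝ) < x := hx.1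
    have hden : HasDerivAt (fun t : ℝ => A ^ 2 * t) (A ^ 2) x := by
      simpa using (hasDerivAt_id x).const_mul (A ^ 2)
    have hnum : HasDerivAt (fun t => X1 t ^ 2) (2 * X1 x * X1' x) x := by
      have := h1.fun_pow 2
      simpa [mul_comm, mul_assoc, mul_left_comm] using this
    have hdenne : (A ^ 2 * x) ≠ 0 := by positivity
    rw [hHdef, hddef]
    exact (hnum.div hden hdenne).add h2
  -- the key pointwise inequality d ≤ c * H
  have hd_le : ∀ x ∈ Ioo (0:ℝ) T, d x ≤ c x * H x := by
    intro x hx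
    rw [hddef]
    have hx0 : (0:ℝ) < x := hx.1
    have hxI : x ∈ Icc (0:ℝ) T := ⟨hx.1.le, hx.2.le⟩
    set s := Real.sqrt (Y x) with hsdef
    have hs2 : s ^ 2 = Y x := Real.sq_sqrt (hYnn x hxI)
    have hsnn : 0 ≤ s := Real.sqrt_nonneg _
    have hX1x : 0 ≤ X1 x := hX1nn x hxI
    have h1 : X1' x ≤ A * s := hIneq1 x hxI
    have key1 : (2 * X1 x * X1' x * (A ^ 2 * x) - X1 x ^ 2 * (A ^ 2)) / (A ^ 2 * x) ^ 2
        ≤ Y x := by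
      rw [div_le_iff₀ (by positivity)]
      have hmul : 2 * X1 x * X1' x * (A ^ 2 * x) ≤ 2 * X1 x * (A * s) * (A ^ 2 * x) := by
        have hfac : (0:ℝ) ≤ 2 * X1 x * (A ^ 2 * x) := by positivity
        nlinarith [mul_le_mul_of_nonneg_left h1 hfac]
      nlinarith [sq_nonneg (X1 x * A - s * (A ^ 2 * x)), hs2, hmul]
    have key2 : Y x + X2' x ≤ β x * X2 x + γ x * X1 x ^ 2 := by
      linarith [hIneq2 x hxI]
    have key3 : β x * X2 x + γ x * X1 x ^ 2 ≤ c x * H x := by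
      have hsum : c x * H x = β x * X2 x + γ x * X1 x ^ 2 +
          (β x * (X1 x ^ 2 / (A ^ 2 * x)) + A ^ 2 * (x * γ x) * X2 x) := by
        simp only [hcdef, hHdef]
        field_simp
        ring
      have hnn1 : 0 ≤ β x * (X1 x ^ 2 / (A ^ 2 * x)) :=
        mul_nonneg (hβnn x hxI) (div_nonneg (sq_nonneg _) (by positivity))
      have hnn2 : 0 ≤ A ^ 2 * (x * γ x) * X2 x :=
        mul_nonneg (mul_nonneg hA2.le (mul_nonneg hx0.le (hγnn x hxI))) (hX2nn x hxI)
      rw [hsum]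
      linarith
    calc (2 * X1 x * X1' x * (A ^ 2 * x) - X1 x ^ 2 * (A ^ 2)) / (A ^ 2 * x) ^ 2 + X2' x
        ≤ Y x + X2' x := add_le_add_left key1 _
      _ ≤ β x * X2 x + γ x * X1 x ^ 2 := key2
      _ ≤ c x * H x := key3
  -- FTC step
  have hstep : ∀ r t : ℝ, r ∈ Icc (0:ℝ) T → t ∈ Icc (0:ℝ) T → r ≤ t →
      H t - H r ≤ ∫ y in r..t, c y * H y := by
    intro r t hr ht hrt
    have hsub : Icc r t ⊆ Icc (0:ℝ) T := Icc_subset_Icc hr.1 ht.2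
    have φint : IntegrableOn (fun y => c y * H y) (Icc r t) :=
      ((hcint.mono hsub le_rfl).mul_continuousOn (hHcont.mono hsub) isCompact_Icc)
    refine intervalIntegral.sub_le_integral_of_hasDeriv_right_of_le (g' := d) hrt
      (hHcont.mono hsub) (fun x hx => ?_) φint (fun x hx => ?_)
    · exact (hHderiv x ⟨lt_of_le_of_lt hr.1 hx.1, lt_of_lt_of_le hx.2 ht.2⟩).hasDerivWithinAt
    · exact hd_le x ⟨lt_of_le_of_lt hr.1 hx.1, lt_of_lt_of_le hx.2 ht.2⟩
  -- H vanishes on [0, T] by continuous induction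
  have hHzero : ∀ t ∈ Icc (0:ℝ) T, H t = 0 := by
    set S : Set ℝ := {t | ∀ u ∈ Icc (0:ℝ) t, H u = 0} with hSdef
    have hS0 : (0:ℝ) ∈ S := by
      intro u hu
      have : u = 0 := le_antisymm hu.2 hu.1
      rw [this, hH0]
    have hSclosed : IsClosed (S ∩ Icc (0:ℝ) T) := by
      refine IsSeqClosed.isClosed ?_
      intro x p hx hp
      have hpI : p ∈ Icc (0:ℝ) T :=
        isClosed_Icc.mem_of_tendsto hp (Filter.Eventually.of_forall fun n => (hx n).2)
      refine ⟨fun u hu => ?_, hpI⟩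
      rcases eq_or_lt_of_le hu.2 with h | h
      · -- u = p : use continuity and H (x n) = 0
        have h1 : Filter.Tendsto (fun n => H (x n)) Filter.atTop (nhds (H p)) := by
          refine (hHcont p hpI).tendsto.comp ?_
          exact tendsto_nhdsWithin_of_tendsto_nhds_of_eventually_within _ hp
            (Filter.Eventually.of_forall fun n => (hx n).2)
        have h2 : ∀ n, H (x n) = 0 := fun n => (hx n).1 (x n) ⟨(hx n).2.1, le_rfl⟩
        have h3 : Filter.Tendsto (fun _ : ℕ => (0:ℝ)) Filter.atTop (nhds (H p)) := by
          refine h1.congr fun n => (h2 n).symm ▸ rfl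
        have : H p = 0 := tendsto_nhds_unique h3 tendsto_const_nhds
        rw [h, this]
      · -- u < p : eventually u ≤ x n
        obtain ⟨n, hn⟩ := (hp.eventually_const_lt h).exists
        exact (hx n).1 u ⟨hu.1, hn.le⟩
    have hgt : ∀ x ∈ S ∩ Ico (0:ℝ) T, ∀ y ∈ Ioi x, (S ∩ Ioc x y).Nonempty := by
      rintro x ⟨hxS, hx0, hxT⟩ y hy
      have hxI : x ∈ Icc (0:ℝ) T := ⟨hx0, hxT.le⟩
      have hcx : IntegrableOn c (Icc x T) :=
        hcint.mono (Icc_subset_Icc hx0 le_rfl) le_rfl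
      have hP : ContinuousOn (fun z => ∫ u in Ioc x z, c u) (Icc x T) :=
        intervalIntegral.continuousOn_primitive hcx
      have hPx : (∫ u in Ioc x x, c u) = 0 := by simp
      have h12 : ∀ᶠ z in nhdsWithin x (Icc x T), (∫ u in Ioc x z, c u) < 1/2 := by
        have ht2 := (hP x ⟨le_rfl, hxT.le⟩).tendsto
        rw [hPx] at ht2
        exact ht2.eventually_lt_const (by norm_num)
      -- restrict to the right-neighbourhood filter and pick a good point z₀
      have hmem1 : Ioc x y ∈ nhdsWithin x (Ioi x) := by
        have h := inter_mem_nhdsWithin (Ioi x) (Iic_mem_nhds hy)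
        simpa [Ioi_inter_Iic] using h
      have hmem2 : Ioc x T ∈ nhdsWithin x (Ioi x) := by
        have h := inter_mem_nhdsWithin (Ioi x) (Iic_mem_nhds hxT)
        simpa [Ioi_inter_Iic] using h
      have hle : nhdsWithin x (Ioi x) ≤ nhdsWithin x (Icc x T) :=
        nhdsWithin_le_of_mem (Filter.mem_of_superset hmem2 Ioc_subset_Icc_self)
      have hEmem : {z | (∫ u in Ioc x z, c u) < 1/2} ∈ nhdsWithin x (Ioi x) := hle h12
      obtain ⟨z₀, hz₀⟩ :=
        Filter.nonempty_of_mem (Filter.inter_mem (Filter.inter_mem hEmem hmem1) hmem2)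
      obtain ⟨⟨hz₀E, hz₀y⟩, hz₀T⟩ := hz₀
      have hz₀I : z₀ ∈ Icc (0:ℝ) T := ⟨hx0.trans hz₀y.1.le, hz₀T.2⟩
      have hKsub : Icc x z₀ ⊆ Icc (0:ℝ) T := Icc_subset_Icc hx0 hz₀I.2
      obtain ⟨u₀, hu₀K, hu₀max⟩ :=
        isCompact_Icc.exists_isMaxOn (nonempty_Icc.mpr hz₀y.1.le) (hHcont.mono hKsub)
      have hHx : H x = 0 := hxS x ⟨hx0, le_rfl⟩
      have hHu₀ : 0 ≤ H u₀ := hHnn u₀ (hKsub hu₀K)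
      have hbound : ∀ u ∈ Icc x z₀, H u ≤ 1/2 * H u₀ := by
        intro u huK
        have huI : u ∈ Icc (0:ℝ) T := hKsub huK
        have h1 : H u - H x ≤ ∫ ν in x..u, c ν * H ν := hstep x u hxI huI huK.1
        have hsubxu : Icc x u ⊆ Icc (0:ℝ) T := Icc_subset_Icc hx0 huI.2
        have hint1 : IntervalIntegrable (fun ν => c ν * H ν) volume x u := by
          rw [intervalIntegrable_iff_integrableOn_Icc_of_le huK.1]
          exact (hcint.mono hsubxu le_rfl).mul_continuousOn (hHcont.mono hsubxu) isCompact_Icc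
        have hint2 : IntervalIntegrable (fun ν => c ν * H u₀) volume x u := by
          rw [intervalIntegrable_iff_integrableOn_Icc_of_le huK.1]
          exact (hcint.mono hsubxu le_rfl).mul_const _
        have h2 : (∫ ν in x..u, c ν * H ν) ≤ ∫ ν in x..u, c ν * H u₀ := by
          refine intervalIntegral.integral_mono_on huK.1 hint1 hint2 fun ν hν => ?_
          have hνK : ν ∈ Icc x z₀ := ⟨hν.1, hν.2.trans huK.2⟩
          exact mul_le_mul_of_nonneg_left (hu₀max hνK) (hcnn ν (hKsub hνK))
        have h3 : (∫ ν in x..u, c ν * H u₀) = (∫ ν in x..u, c ν) * H u₀ :=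
          intervalIntegral.integral_mul_const _ _
        have h4 : (∫ ν in x..u, c ν) ≤ 1/2 := by
          rw [intervalIntegral.integral_of_le huK.1]
          have hmono : (∫ ν in Ioc x u, c ν) ≤ ∫ ν in Ioc x z₀, c ν := by
            refine setIntegral_mono_set
              (hcint.mono (fun ν hν => ⟨hx0.trans hν.1.le, hν.2.trans hz₀I.2⟩) le_rfl) ?_ ?_
            · filter_upwards [ae_restrict_mem measurableSet_Ioc] with ν hν
              exact hcnn ν ⟨hx0.trans hν.1.le, hν.2.trans hz₀I.2⟩
            · exact (Ioc_subset_Ioc_right huK.2).eventuallyLE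
          have := hz₀E
          simp only [mem_setOf_eq] at this
          linarith
        calc H u = H u - H x := by rw [hHx, sub_zero]
          _ ≤ ∫ ν in x..u, c ν * H ν := h1
          _ ≤ (∫ ν in x..u, c ν) * H u₀ := by rw [← h3]; exact h2
          _ ≤ 1/2 * H u₀ := mul_le_mul_of_nonneg_right h4 hHu₀
      have hb := hbound u₀ hu₀K
      have hmax0 : H u₀ = 0 := by
        have h2 : (2:ℝ) * H u₀ ≤ H u₀ := by linarith
        linarith
      refine ⟨z₀, fun u hu => ?_, hz₀y⟩
      by_cases hcase : u ≤ x
      · exact hxS u ⟨hu.1, hcase⟩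
      · push_neg at hcase
        have huK : u ∈ Icc x z₀ := ⟨hcase.le, hu.2⟩
        exact le_antisymm (by simpa [hmax0] using hu₀max huK) (hHnn u (hKsub huK))
    have hind := IsClosed.Icc_subset_of_forall_exists_gt hSclosed hS0 hgt
    intro t ht
    exact (hind ht) t ⟨ht.1, le_rfl⟩
  -- extraction
  have hX2z : ∀ t ∈ Icc (0:ℝ) T, X2 t = 0 := by
    intro t ht
    have hH := hHzero t ht
    have h1 : 0 ≤ X1 t ^ 2 / (A ^ 2 * t) := div_nonneg (sq_nonneg _) (mul_nonneg hA2.le ht.1)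
    have h2 : 0 ≤ X2 t := hX2nn t ht
    have h3 : X1 t ^ 2 / (A ^ 2 * t) + X2 t = 0 := by rw [← hH, hHdef]
    linarith
  have hX1z : ∀ t ∈ Icc (0:ℝ) T, X1 t = 0 := by
    intro t ht
    rcases eq_or_lt_of_le ht.1 with h0 | h0
    · rw [← h0]; exact hX10
    · have hH := hHzero t ht
      have h1 : 0 ≤ X1 t ^ 2 / (A ^ 2 * t) := div_nonneg (sq_nonneg _) (mul_nonneg hA2.le ht.1)
      have h2 : 0 ≤ X2 t := hX2nn t ht
      have h3 : X1 t ^ 2 / (A ^ 2 * t) + X2 t = 0 := by rw [← hH, hHdef]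
      have h4 : X1 t ^ 2 / (A ^ 2 * t) = 0 := by linarith
      have hden : (A ^ 2 * t) ≠ 0 := by positivity
      have h5 : X1 t ^ 2 = 0 := by
        rcases div_eq_zero_iff.1 h4 with h | h
        · exact h
        · exact absurd h hden
      exact pow_eq_zero_iff two_ne_zero |>.1 h5
  have hX2'z : ∀ t ∈ Icc (0:ℝ) T, X2' t = 0 := by
    intro t ht
    have hu : UniqueDiffOn ℝ (Icc (0:ℝ) T) := uniqueDiffOn_Icc hT
    have h1 : HasDerivWithinAt X2 (X2' t) (Icc (0:ℝ) T) t := (hX2deriv t ht).hasDerivWithinAt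
    have h2 : HasDerivWithinAt X2 0 (Icc (0:ℝ) T) t := by
      have hc : HasDerivWithinAt (fun _ : ℝ => (0:ℝ)) 0 (Icc (0:ℝ) T) t :=
        hasDerivWithinAt_const t _ 0
      exact hc.congr (fun y hy => hX2z y hy) (hX2z t ht)
    have e1 := h1.derivWithin (hu t ht)
    have e2 := h2.derivWithin (hu t ht)
    rw [← e1, e2]
  have hYz : ∀ t ∈ Icc (0:ℝ) T, Y t = 0 := by
    intro t ht
    have hI := hIneq2 t ht
    rw [hX2'z t ht, hX1z t ht, hX2z t ht] at hI
    simp at hI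
    exact le_antisymm hI (hYnn t ht)
  refine ⟨fun t ht => ⟨hX1z t ht, hX2z t ht⟩, ?_⟩
  filter_upwards [ae_restrict_mem measurableSet_Icc] with t ht using hYz t ht
end

section
/- For divergence-free u : ℝ² → ℝ² smooth with sufficient decay, ∫_{ℝ²} (u·∇u)·Δu dx = 0. -/
open MeasureTheory
open scoped RealInnerProductSpace

noncomputable section

abbrev E2 : Type := EuclideanSpace ℝ (Fin 2)

/-- The (componentwise) Laplacian of a vector field on ℝ². -/
def lap (u : E2 → E2) (x : E2) : E2 :=
  (WithLp.equiv 2 (Fin 2 → ℝ)).symm (fun i => ∑ j,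
    fderiv ℝ (fun y => fderiv ℝ (fun z => u z i) y (EuclideanSpace.single j (1:ℝ))) x
      (EuclideanSpace.single j (1:ℝ)))

namespace CLO
open Set Function
def ee (i : Fin 2) : E2 := EuclideanSpace.single i (1:ℝ)
def pd (i : Fin 2) (f : E2 → ℝ) : E2 → ℝ := fun x => fderiv ℝ f x (ee i)

variable {f g : E2 → ℝ}

lemma pd_contDiff (i : Fin 2) (hf : ContDiff ℝ (⊤ : ℕ∞) f) : ContDiff ℝ (⊤ : ℕ∞) (pd i f) :=
  (hf.fderiv_right (by simp)).clm_apply contDiff_const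

lemma pd_sub' (i : Fin 2) (hf : ContDiff ℝ (⊤ : ℕ∞) f) (hg : ContDiff ℝ (⊤ : ℕ∞) g) (x : E2) :
    pd i (f - g) x = pd i f x - pd i g x := by
  have : (f - g) = fun y => f y - g y := rfl
  simp only [pd, this, fderiv_fun_sub (hf.differentiable (by simp)).differentiableAt
    (hg.differentiable (by simp)).differentiableAt]
  rfl

lemma pd_sub_fun (i : Fin 2) (hf : ContDiff ℝ (⊤ : ℕ∞) f) (hg : ContDiff ℝ (⊤ : ℕ∞) g) :
    pd i (f - g) = pd i f - pd i g := funext fun x => pd_sub' i hf hg x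

lemma pd_add' (i : Fin 2) (hf : ContDiff ℝ (⊤ : ℕ∞) f) (hg : ContDiff ℝ (⊤ : ℕ∞) g) (x : E2) :
    pd i (f + g) x = pd i f x + pd i g x := by
  have : (f + g) = fun y => f y + g y := rfl
  simp only [pd, this, fderiv_fun_add (hf.differentiable (by simp)).differentiableAt
    (hg.differentiable (by simp)).differentiableAt]
  rfl

lemma pd_neg' (i : Fin 2) (x : E2) : pd i (-f) x = -(pd i f x) := by
  have : (-f) = fun y => -(f y) := rfl
  simp only [pd, this, fderiv_fun_neg]
  rfl

lemma pd_mul' (i : Fin 2) (hf : ContDiff ℝ (⊤ : ℕ∞) f) (hg : ContDiff ℝ (⊤ : ℕ∞) g) (x : E2) :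
    pd i (f * g) x = f x * pd i g x + g x * pd i f x := by
  have : (f * g) = fun y => f y * g y := rfl
  simp only [pd, this, fderiv_fun_mul (hf.differentiable (by simp)).differentiableAt
    (hg.differentiable (by simp)).differentiableAt]
  rfl

lemma pd_smul' (i : Fin 2) (hf : ContDiff ℝ (⊤ : ℕ∞) f) (c : ℝ) (x : E2) :
    pd i (c • f) x = c * pd i f x := by
  have h : (c • f) = fun y => c • (f y) := rfl
  simp only [pd, h, fderiv_fun_const_smul (hf.differentiable (by simp)).differentiableAt]
  rfl

lemma pd_pd_eq (i j : Fin 2) (hf : ContDiff ℝ (⊤ : ℕ∞) f) (x : E2) :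
    pd i (pd j f) x = fderiv ℝ (fderiv ℝ f) x (ee i) (ee j) := by
  have hd : DifferentiableAt ℝ (fderiv ℝ f) x :=
    ((hf.fderiv_right (m := 1) (by exact WithTop.coe_le_coe.mpr (le_top : ((1+1 : ℕ) : ℕ∞) ≤ ⊤))).differentiable one_ne_zero).differentiableAt
  have h : pd j f = fun y => (fderiv ℝ f y) (ee j) := rfl
  rw [pd, h, fderiv_clm_apply hd (differentiableAt_const _)]
  simp

lemma pd_comm (i j : Fin 2) (hf : ContDiff ℝ (⊤ : ℕ∞) f) (x : E2) :
    pd i (pd j f) x = pd j (pd i f) x := by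
  rw [pd_pd_eq i j hf, pd_pd_eq j i hf]
  exact hf.contDiffAt.isSymmSndFDerivAt (by rw [minSmoothness_of_isRCLikeNormedField]; exact WithTop.coe_le_coe.mpr (le_top : (2 : ℕ∞) ≤ ⊤)) _ _

def wv (a b : E2 → ℝ) : E2 → ℝ := pd 0 b - pd 1 a
def pv (a b : E2 → ℝ) : E2 → ℝ := (1/2 : ℝ) • (a * a + b * b)
def Fz (a b : E2 → ℝ) : E2 → ℝ := (1/2 : ℝ) • (a * wv a b * wv a b) - pv a b * pd 1 (wv a b)
def Fo (a b : E2 → ℝ) : E2 → ℝ := pv a b * pd 0 (wv a b) + (1/2 : ℝ) • (b * wv a b * wv a b)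

lemma pointwise_key (a b : E2 → ℝ) (ha : ContDiff ℝ (⊤ : ℕ∞) a) (hb : ContDiff ℝ (⊤ : ℕ∞) b)
    (hd : ∀ y, pd 0 a y + pd 1 b y = 0) (x : E2) :
    (a x * pd 0 a x + b x * pd 1 a x) * (pd 0 (pd 0 a) x + pd 1 (pd 1 a) x)
      + (a x * pd 0 b x + b x * pd 1 b x) * (pd 0 (pd 0 b) x + pd 1 (pd 1 b) x)
    = pd 0 (Fz a b) x + pd 1 (Fo a b) x := by
  have c0b : ContDiff ℝ (⊤ : ℕ∞) (pd 0 b) := pd_contDiff 0 hb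
  have c1a : ContDiff ℝ (⊤ : ℕ∞) (pd 1 a) := pd_contDiff 1 ha
  have cw : ContDiff ℝ (⊤ : ℕ∞) (wv a b) := c0b.sub c1a
  have caa : ContDiff ℝ (⊤ : ℕ∞) (a * a) := ha.mul ha
  have cbb : ContDiff ℝ (⊤ : ℕ∞) (b * b) := hb.mul hb
  have cab : ContDiff ℝ (⊤ : ℕ∞) (a * a + b * b) := by exact caa.add cbb
  have cp : ContDiff ℝ (⊤ : ℕ∞) (pv a b) := by
    have h := cab.const_smul ((1/2):ℝ); exact h
  have caw : ContDiff ℝ (⊤ : ℕ∞) (a * wv a b) := ha.mul cw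
  have cbw : ContDiff ℝ (⊤ : ℕ∞) (b * wv a b) := hb.mul cw
  have caww : ContDiff ℝ (⊤ : ℕ∞) (a * wv a b * wv a b) := caw.mul cw
  have cbww : ContDiff ℝ (⊤ : ℕ∞) (b * wv a b * wv a b) := cbw.mul cw
  have cw0 : ContDiff ℝ (⊤ : ℕ∞) (pd 0 (wv a b)) := pd_contDiff 0 cw
  have cw1 : ContDiff ℝ (⊤ : ℕ∞) (pd 1 (wv a b)) := pd_contDiff 1 cw
  have c00b : ContDiff ℝ (⊤ : ℕ∞) (pd 0 (pd 0 b)) := pd_contDiff 0 c0b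
  have c01a : ContDiff ℝ (⊤ : ℕ∞) (pd 0 (pd 1 a)) := pd_contDiff 0 c1a
  -- the inner derivative of w, as functions
  have hw0 : pd 0 (wv a b) = pd 0 (pd 0 b) - pd 0 (pd 1 a) := pd_sub_fun 0 c0b c1a
  have hw1 : pd 1 (wv a b) = pd 1 (pd 0 b) - pd 1 (pd 1 a) := pd_sub_fun 1 c0b c1a
  -- expand everything
  rw [Fz, Fo]
  have chaww : ContDiff ℝ (⊤ : ℕ∞) ((1/2 : ℝ) • (a * wv a b * wv a b)) := by
    have h := caww.const_smul ((1/2):ℝ); exact h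
  have chbww : ContDiff ℝ (⊤ : ℕ∞) ((1/2 : ℝ) • (b * wv a b * wv a b)) := by
    have h := cbww.const_smul ((1/2):ℝ); exact h
  have cpw1 : ContDiff ℝ (⊤ : ℕ∞) (pv a b * pd 1 (wv a b)) := by exact cp.mul cw1
  have cpw0 : ContDiff ℝ (⊤ : ℕ∞) (pv a b * pd 0 (wv a b)) := by exact cp.mul cw0
  rw [pd_sub' 0 chaww cpw1 x,
      pd_add' 1 cpw0 chbww x,
      pd_smul' 0 caww, pd_smul' 1 cbww,
      pd_mul' 0 caw cw x, pd_mul' 1 cbw cw x,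
      pd_mul' 0 ha cw x, pd_mul' 1 hb cw x,
      pd_mul' 0 cp cw1 x, pd_mul' 1 cp cw0 x,
      pv, pd_smul' 0 cab, pd_smul' 1 cab,
      pd_add' 0 caa cbb x, pd_add' 1 caa cbb x,
      pd_mul' 0 ha ha x, pd_mul' 1 ha ha x,
      pd_mul' 0 hb hb x, pd_mul' 1 hb hb x]
  -- expand first derivatives of w (pointwise values and nested functions)
  rw [hw0, hw1]
  rw [pd_sub' 0 (pd_contDiff 1 c0b) (pd_contDiff 1 c1a) x,
      pd_sub' 1 (pd_contDiff 0 c0b) (pd_contDiff 0 c1a) x,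
      pd_comm 1 0 c0b x, pd_comm 1 0 c1a x]
  simp only [Pi.sub_apply, Pi.add_apply, Pi.mul_apply, Pi.smul_apply, smul_eq_mul, Pi.neg_apply]
  rw [pd_comm 1 0 hb x]
  have hb1 : pd 1 b = -pd 0 a := funext fun y => by
    have h := hd y
    simp only [Pi.neg_apply]
    linarith
  rw [hb1, pd_neg' 1, pd_neg' 0, pd_comm 1 0 ha x]
  simp only [Pi.neg_apply, wv, Pi.sub_apply]
  ring

abbrev P2 : Type := Fin 2 → ℝ

lemma integral_div_eq_zero (f : Fin 2 → E2 → ℝ) (hf : ∀ i, ContDiff ℝ (⊤ : ℕ∞) (f i))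
    (hs : ∀ i, HasCompactSupport (f i)) :
    ∫ x : E2, (pd 0 (f 0) x + pd 1 (f 1) x) = 0 := by
  classical
  set L : E2 ≃L[ℝ] P2 := PiLp.continuousLinearEquiv 2 ℝ (fun _ : Fin 2 => ℝ) with hL
  set g : Fin 2 → P2 → ℝ := fun i => f i ∘ L.symm with hg
  have hgc : ∀ i, ContDiff ℝ (⊤ : ℕ∞) (g i) := fun i => (hf i).comp L.symm.contDiff
  have hgs : ∀ i, HasCompactSupport (g i) := fun i =>
    (hs i).comp_homeomorph L.symm.toHomeomorph
  -- derivative transfer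
  have hder : ∀ (i j : Fin 2) (y : P2),
      fderiv ℝ (g i) y (Pi.single j 1) = pd j (f i) (L.symm y) := by
    intro i j y
    have h1 : fderiv ℝ (g i) y =
        (fderiv ℝ (f i) (L.symm y)).comp (L.symm : P2 →L[ℝ] E2) := by
      rw [hg]
      rw [fderiv_comp y ((hf i).differentiable (by simp)).differentiableAt
        L.symm.differentiableAt, L.symm.fderiv]
    rw [h1]; rfl
  -- bounding box
  obtain ⟨R, hR⟩ : ∃ R : ℝ, ∀ i, tsupport (g i) ⊆ Metric.closedBall 0 R := by
    obtain ⟨r0, h0⟩ := (hgs 0).isBounded.subset_closedBall 0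
    obtain ⟨r1, h1⟩ := (hgs 1).isBounded.subset_closedBall 0
    refine ⟨max r0 r1, fun i => ?_⟩
    fin_cases i
    · exact h0.trans (Metric.closedBall_subset_closedBall (le_max_left _ _))
    · exact h1.trans (Metric.closedBall_subset_closedBall (le_max_right _ _))
  set a : P2 := fun _ => -(|R| + 1) with ha
  set b : P2 := fun _ => (|R| + 1) with hb
  have hRR : (R:ℝ) ≤ |R| := le_abs_self R
  have hout : ∀ y : P2, (∃ i, |y i| > |R|) → ∀ i, y ∉ tsupport (g i) := by
    rintro y ⟨i, hi⟩ j hy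
    have := (hR j hy)
    rw [Metric.mem_closedBall, dist_zero_right] at this
    have hle : |y i| ≤ ‖y‖ := norm_le_pi_norm y i
    linarith
  have hgz : ∀ (y : P2), (∃ i, |y i| > |R|) → ∀ j, g j y = 0 := by
    intro y hy j
    exact image_eq_zero_of_notMem_tsupport (hout y hy j)
  have hfz : ∀ (y : P2), (∃ i, |y i| > |R|) → ∀ j k, fderiv ℝ (g j) y (Pi.single k 1) = 0 := by
    intro y hy j k
    have : fderiv ℝ (g j) y = 0 := by
      have := support_fderiv_subset (𝕜 := ℝ) (f := g j)
      by_contra hne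
      exact hout y hy j (this hne)
    simp [this]
  have hcont : ∀ j k, Continuous (fun y : P2 => fderiv ℝ (g j) y (Pi.single k 1)) := by
    intro j k
    exact (ContDiff.clm_apply (n := (⊤ : ℕ∞)) ((hgc j).fderiv_right (by simp))
      contDiff_const).continuous
  have hle : a ≤ b := by
    intro i
    have : (0:ℝ) ≤ |R| := abs_nonneg R
    simp only [ha, hb]
    linarith
  have hdivsum : Continuous (fun y : P2 => ∑ i, fderiv ℝ (g i) y (Pi.single i 1)) := by
    simp only [Fin.sum_univ_two]; exact (hcont 0 0).add (hcont 1 1)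
  have hdiv := integral_divergence_of_hasFDerivAt_off_countable' a b hle
    g (fun i y => fderiv ℝ (g i) y) ∅ countable_empty
    (fun i => ((hgc i).continuous).continuousOn)
    (fun x _ i => (((hgc i).differentiable (by simp)).differentiableAt).hasFDerivAt)
    (hdivsum.continuousOn.integrableOn_compact isCompact_Icc)
  -- the face integrals vanish
  have habs : ∀ c : ℝ, (c = |R| + 1 ∨ c = -(|R| + 1)) → |c| > |R| := by
    rintro c (rfl | rfl) <;>
      [rw [abs_of_nonneg (by positivity)]; rw [abs_neg, abs_of_nonneg (by positivity)]] <;>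
      linarith
  have hface : ∀ (i : Fin 2) (c : ℝ), (c = |R| + 1 ∨ c = -(|R| + 1)) →
      (∫ x in Icc (a ∘ i.succAbove) (b ∘ i.succAbove), g i (i.insertNth c x)) = 0 := by
    intro i c hc
    have hz : (fun x : Fin 1 → ℝ => g i (i.insertNth c x)) = fun _ => (0:ℝ) := by
      funext x
      exact hgz _ ⟨i, by rw [Fin.insertNth_apply_same]; exact habs c hc⟩ i
    rw [hz]
    simp
  rw [Fin.sum_univ_two] at hdiv
  rw [hface 0 (b 0) (Or.inl rfl), hface 1 (b 1) (Or.inl rfl),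
    hface 0 (a 0) (Or.inr rfl), hface 1 (a 1) (Or.inr rfl)] at hdiv
  simp only [sub_zero, sub_self, add_zero] at hdiv
  -- extend the integral over the box to the whole space
  have hbox : (∫ x in Icc a b, ∑ i, fderiv ℝ (g i) x (Pi.single i 1)) =
      ∫ x : P2, ∑ i, fderiv ℝ (g i) x (Pi.single i 1) := by
    apply setIntegral_eq_integral_of_forall_compl_eq_zero
    intro x hx
    have : ∃ i, |x i| > |R| := by
      rw [Set.mem_Icc] at hx
      push_neg at hx
      rcases Classical.em (a ≤ x) with h1 | h1
      · obtain ⟨i, hi⟩ := not_forall.1 (fun hall => (hx h1) (fun j => hall j))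
        refine ⟨i, ?_⟩
        have : (|R| + 1 : ℝ) < x i := by simpa [hb] using lt_of_not_ge hi
        have h2 := le_abs_self (x i)
        clear hx h1 hi
        linarith [abs_nonneg R]
      · obtain ⟨i, hi⟩ := not_forall.1 (fun hall => h1 (fun j => hall j))
        refine ⟨i, ?_⟩
        have : x i < -(|R| + 1) := by simpa [ha] using lt_of_not_ge hi
        have h2 : |x i| ≥ -(x i) := neg_le_abs _
        clear hx h1 hi
        linarith [abs_nonneg R]
    rw [Fin.sum_univ_two, hfz x this 0 0, hfz x this 1 1, add_zero]
  rw [hbox] at hdiv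
  -- transfer to E2
  have hmp : MeasurePreserving ((MeasurableEquiv.toLp 2 (Fin 2 → ℝ))) volume volume :=
    (EuclideanSpace.volume_preserving_symm_measurableEquiv_toLp (Fin 2)).symm
  have htrans := hmp.integral_comp' (f := (MeasurableEquiv.toLp 2 (Fin 2 → ℝ)))
    (fun x : E2 => pd 0 (f 0) x + pd 1 (f 1) x)
  rw [← htrans]
  rw [show (fun y : P2 => pd 0 (f 0) ((MeasurableEquiv.toLp 2 (Fin 2 → ℝ)) y) +
      pd 1 (f 1) ((MeasurableEquiv.toLp 2 (Fin 2 → ℝ)) y)) =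
      (fun y : P2 => ∑ i, fderiv ℝ (g i) y (Pi.single i 1)) from funext fun y => by
    rw [Fin.sum_univ_two, hder 0 0 y, hder 1 1 y]; rfl]
  exact hdiv


lemma hasCompactSupport_Fz {a b : E2 → ℝ} (hsa : HasCompactSupport a)
    (hsb : HasCompactSupport b) : HasCompactSupport (Fz a b) := by
  have h1 : HasCompactSupport (a * wv a b * wv a b) := hsa.mul_right.mul_right
  have h2 : HasCompactSupport ((1/2 : ℝ) • (a * wv a b * wv a b)) := by
    exact h1.smul_left
  have h3 : HasCompactSupport (pv a b) := by
    have : HasCompactSupport (a * a + b * b) := (hsa.mul_right).add (hsb.mul_right)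
    exact this.smul_left
  have h4 : HasCompactSupport (pv a b * pd 1 (wv a b)) := h3.mul_right
  have h5 : HasCompactSupport (-(pv a b * pd 1 (wv a b))) := by
    exact h4.comp_left (g := Neg.neg) neg_zero
  have h6 := h2.add h5
  rwa [← sub_eq_add_neg] at h6

lemma hasCompactSupport_Fo {a b : E2 → ℝ} (hsa : HasCompactSupport a)
    (hsb : HasCompactSupport b) : HasCompactSupport (Fo a b) := by
  have h1 : HasCompactSupport (b * wv a b * wv a b) := hsb.mul_right.mul_right
  have h2 : HasCompactSupport ((1/2 : ℝ) • (b * wv a b * wv a b)) := by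
    exact h1.smul_left
  have h3 : HasCompactSupport (pv a b) := by
    have : HasCompactSupport (a * a + b * b) := (hsa.mul_right).add (hsb.mul_right)
    exact this.smul_left
  have h4 : HasCompactSupport (pv a b * pd 0 (wv a b)) := h3.mul_right
  exact h4.add h2

lemma contDiff_Fz {a b : E2 → ℝ} (ha : ContDiff ℝ (⊤ : ℕ∞) a) (hb : ContDiff ℝ (⊤ : ℕ∞) b) :
    ContDiff ℝ (⊤ : ℕ∞) (Fz a b) := by
  have cw : ContDiff ℝ (⊤ : ℕ∞) (wv a b) := (pd_contDiff 0 hb).sub (pd_contDiff 1 ha)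
  have cp : ContDiff ℝ (⊤ : ℕ∞) (pv a b) := by
    have h := ((ha.mul ha).add (hb.mul hb)).const_smul ((1/2):ℝ); exact h
  have h1 : ContDiff ℝ (⊤ : ℕ∞) ((1/2 : ℝ) • (a * wv a b * wv a b)) := by
    have h := ((ha.mul cw).mul cw).const_smul ((1/2):ℝ); exact h
  exact h1.sub (cp.mul (pd_contDiff 1 cw))

lemma contDiff_Fo {a b : E2 → ℝ} (ha : ContDiff ℝ (⊤ : ℕ∞) a) (hb : ContDiff ℝ (⊤ : ℕ∞) b) :
    ContDiff ℝ (⊤ : ℕ∞) (Fo a b) := by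
  have cw : ContDiff ℝ (⊤ : ℕ∞) (wv a b) := (pd_contDiff 0 hb).sub (pd_contDiff 1 ha)
  have cp : ContDiff ℝ (⊤ : ℕ∞) (pv a b) := by
    have h := ((ha.mul ha).add (hb.mul hb)).const_smul ((1/2):ℝ); exact h
  have h1 : ContDiff ℝ (⊤ : ℕ∞) ((1/2 : ℝ) • (b * wv a b * wv a b)) := by
    have h := ((hb.mul cw).mul cw).const_smul ((1/2):ℝ); exact h
  exact (cp.mul (pd_contDiff 0 cw)).add h1

end CLO

open CLO in
/-- For smooth compactly supported divergence-free `u : ℝ² → ℝ²`,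
`∫ (u·∇u)·Δu dx = 0`. -/
theorem convective_laplacian_orthogonal_2d
    (u : E2 → E2) (hreg : ContDiff ℝ (⊤ : ℕ∞) u) (hsupp : HasCompactSupport u)
    (hdiv : ∀ x, ∑ i, fderiv ℝ u x (EuclideanSpace.single i (1:ℝ)) i = 0) :
    (∫ x : E2, ⟪fderiv ℝ u x (u x), lap u x⟫) = 0 := by
  set a : E2 → ℝ := fun y => u y 0 with hadef
  set b : E2 → ℝ := fun y => u y 1 with hbdef
  have ha : ContDiff ℝ (⊤ : ℕ∞) a := by exact (EuclideanSpace.proj (𝕜 := ℝ) (0 : Fin 2)).contDiff.comp hreg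
  have hb : ContDiff ℝ (⊤ : ℕ∞) b := by exact (EuclideanSpace.proj (𝕜 := ℝ) (1 : Fin 2)).contDiff.comp hreg
  have hsa : HasCompactSupport a := by
    exact hsupp.comp_left (g := fun v : E2 => v 0) rfl
  have hsb : HasCompactSupport b := by
    exact hsupp.comp_left (g := fun v : E2 => v 1) rfl
  have hcomp : ∀ (x v : E2) (i : Fin 2),
      fderiv ℝ u x v i = fderiv ℝ (fun y => u y i) x v := by
    intro x v i
    have h : (fun y => u y i) = (EuclideanSpace.proj (𝕜 := ℝ) i) ∘ u := rfl
    rw [h, fderiv_comp x (EuclideanSpace.proj (𝕜 := ℝ) i).differentiableAt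
      (hreg.differentiable (by simp)).differentiableAt, ContinuousLinearMap.fderiv]
    rfl
  have hd : ∀ y, pd 0 a y + pd 1 b y = 0 := by
    intro y
    have h := hdiv y
    rw [Fin.sum_univ_two, hcomp y _ 0, hcomp y _ 1] at h
    exact h
  have hvec : ∀ v : E2, v = v 0 • ee 0 + v 1 • ee 1 := by
    intro v
    ext j
    fin_cases j <;> simp [ee, EuclideanSpace.single_apply]
  have hexp : ∀ (x : E2) (ff : E2 → ℝ), fderiv ℝ ff x (u x) =
      u x 0 * pd 0 ff x + u x 1 * pd 1 ff x := by
    intro x ff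
    conv_lhs => rw [hvec (u x)]
    rw [map_add, _root_.map_smul, _root_.map_smul]
    simp [pd, smul_eq_mul]
  have hlap : ∀ (x : E2) (i : Fin 2), lap u x i =
      pd 0 (pd 0 (fun y => u y i)) x + pd 1 (pd 1 (fun y => u y i)) x := by
    intro x i
    have h0 : lap u x i = ∑ j, fderiv ℝ (fun y => fderiv ℝ (fun z => u z i) y
        (EuclideanSpace.single j (1:ℝ))) x (EuclideanSpace.single j (1:ℝ)) := rfl
    rw [h0, Fin.sum_univ_two]
    rfl
  have hL : ∀ x : E2, ⟪fderiv ℝ u x (u x), lap u x⟫ =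
      (a x * pd 0 a x + b x * pd 1 a x) * (pd 0 (pd 0 a) x + pd 1 (pd 1 a) x)
        + (a x * pd 0 b x + b x * pd 1 b x) * (pd 0 (pd 0 b) x + pd 1 (pd 1 b) x) := by
    intro x
    rw [show ⟪fderiv ℝ u x (u x), lap u x⟫ =
      ∑ i, (fderiv ℝ u x (u x) i) * (lap u x i) from ?_]
    · rw [Fin.sum_univ_two, hcomp x (u x) 0, hcomp x (u x) 1, hexp, hexp, hlap, hlap]
    · simp [PiLp.inner_apply]; ring
  have hfun : (fun x : E2 => ⟪fderiv ℝ u x (u x), lap u x⟫) =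
      fun x => pd 0 (Fz a b) x + pd 1 (Fo a b) x :=
    funext fun x => (hL x).trans (pointwise_key a b ha hb hd x)
  rw [hfun]
  have hC : ∀ i, ContDiff ℝ (⊤ : ℕ∞) (![Fz a b, Fo a b] i) := by
    intro i; fin_cases i
    · exact contDiff_Fz ha hb
    · exact contDiff_Fo ha hb
  have hS : ∀ i, HasCompactSupport (![Fz a b, Fo a b] i) := by
    intro i; fin_cases i
    · exact hasCompactSupport_Fz hsa hsb
    · exact hasCompactSupport_Fo hsa hsb
  have hI := integral_div_eq_zero ![Fz a b, Fo a b] hC hS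
  simpa using hI

end
end
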